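/- arXiv:math/0603109 — 8 statements merged into one kernel-verified Lean document; each statement's English description precedes it below -/
import Mathlib

section
/- For all integers κ ≥ θ ≥ 2, the mean-field critical point satisfies 0 < λ_c^MF(κ,θ) < ∞. -/
/-- Bin(κ,x,θ) = ∑_{i=θ}^{κ} (κ choose i) x^i (1−x)^{κ−i}. -/
noncomputable def binTail (κ : ℕ) (x : ℝ) (θ : ℕ) : ℝ :=
  ∑ i ∈ Finset.Icc θ κ, (κ.choose i : ℝ) * x ^ i * (1 - x) ^ (κ - i)

/-- H(κ,θ,λ;x) = −1 + λ·((1−x)/x)·Bin(κ,x,θ). -/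
noncomputable def Hmf (κ θ : ℕ) (lam x : ℝ) : ℝ :=
  -1 + lam * ((1 - x) / x) * binTail κ x θ

/-- λ_c^MF(κ,θ) = sup{λ ≥ 0 : sup_{x∈(0,1]} H(κ,θ,λ;x) < 0}. -/
noncomputable def lambdaMF (κ θ : ℕ) : ℝ :=
  sSup {lam : ℝ | 0 ≤ lam ∧ sSup ((fun x => Hmf κ θ lam x) '' Set.Ioc 0 1) < 0}

lemma binTail_nonneg (κ θ : ℕ) {x : ℝ} (hx : 0 ≤ x) (hx1 : x ≤ 1) :
    0 ≤ binTail κ x θ := by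
  apply Finset.sum_nonneg
  intro i _
  have h1 : (0:ℝ) ≤ 1 - x := by linarith
  have hc : (0:ℝ) ≤ (κ.choose i : ℝ) := by positivity
  positivity

lemma binTail_le (κ θ : ℕ) {x : ℝ} (hx : 0 ≤ x) (hx1 : x ≤ 1) :
    binTail κ x θ ≤ 2 ^ κ * x ^ θ := by
  have h1 : binTail κ x θ ≤ ∑ i ∈ Finset.Icc θ κ, (κ.choose i : ℝ) * x ^ θ := by
    apply Finset.sum_le_sum
    intro i hi
    have hi' : θ ≤ i := (Finset.mem_Icc.mp hi).1
    have hxi : x ^ i ≤ x ^ θ := pow_le_pow_of_le_one hx hx1 hi'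
    have h2 : (1 - x) ^ (κ - i) ≤ 1 := pow_le_one₀ (by linarith) (by linarith)
    have hc : (0:ℝ) ≤ (κ.choose i : ℝ) := by positivity
    calc (κ.choose i : ℝ) * x ^ i * (1 - x) ^ (κ - i)
        ≤ (κ.choose i : ℝ) * x ^ i * 1 := by
          apply mul_le_mul_of_nonneg_left h2; positivity
      _ = (κ.choose i : ℝ) * x ^ i := by ring
      _ ≤ (κ.choose i : ℝ) * x ^ θ := by
          apply mul_le_mul_of_nonneg_left hxi hc
  have h3 : ∑ i ∈ Finset.Icc θ κ, (κ.choose i : ℝ) ≤ 2 ^ κ := by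
    have hsub : Finset.Icc θ κ ⊆ Finset.range (κ + 1) := by
      intro i hi
      simp only [Finset.mem_range, Finset.mem_Icc] at *
      omega
    calc ∑ i ∈ Finset.Icc θ κ, (κ.choose i : ℝ)
        ≤ ∑ i ∈ Finset.range (κ + 1), (κ.choose i : ℝ) := by
          apply Finset.sum_le_sum_of_subset_of_nonneg hsub
          intro i _ _; positivity
      _ = 2 ^ κ := by
          rw [← Nat.cast_sum]
          rw [Nat.sum_range_choose]
          push_cast
          ring
  calc binTail κ x θ ≤ ∑ i ∈ Finset.Icc θ κ, (κ.choose i : ℝ) * x ^ θ := h1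
    _ = (∑ i ∈ Finset.Icc θ κ, (κ.choose i : ℝ)) * x ^ θ := by
        rw [Finset.sum_mul]
    _ ≤ 2 ^ κ * x ^ θ := by
        apply mul_le_mul_of_nonneg_right h3; positivity

/-- For κ ≥ θ ≥ 2, 0 < λ_c^MF(κ,θ) < ∞ (finiteness expressed as boundedness
of the defining set of the supremum). -/
theorem stmt1 (κ θ : ℕ) (hθ : 2 ≤ θ) (hκθ : θ ≤ κ) :
    0 < lambdaMF κ θ ∧
    BddAbove {lam : ℝ | 0 ≤ lam ∧ sSup ((fun x => Hmf κ θ lam x) '' Set.Ioc 0 1) < 0} := by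
  set S := {lam : ℝ | 0 ≤ lam ∧ sSup ((fun x => Hmf κ θ lam x) '' Set.Ioc 0 1) < 0} with hS
  -- binTail at 1/2 is at least (1/2)^κ
  have hbin_half : (1/2 : ℝ) ^ κ ≤ binTail κ (1/2) θ := by
    have hmem : κ ∈ Finset.Icc θ κ := Finset.mem_Icc.mpr ⟨hκθ, le_refl κ⟩
    have := Finset.single_le_sum (f := fun i =>
        (κ.choose i : ℝ) * (1/2) ^ i * (1 - 1/2) ^ (κ - i))
      (fun i _ => by positivity) hmem
    simpa [binTail, Nat.choose_self] using this
  -- Boundedness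
  have hbdd : BddAbove S := by
    refine ⟨2 ^ κ, ?_⟩
    rintro lam ⟨hlam0, hsup⟩
    by_contra hgt
    push_neg at hgt
    have himgbdd : BddAbove ((fun x => Hmf κ θ lam x) '' Set.Ioc 0 1) := by
      by_contra h
      rw [Real.sSup_of_not_bddAbove h] at hsup
      linarith
    have hmem : Hmf κ θ lam (1/2) ∈ (fun x => Hmf κ θ lam x) '' Set.Ioc 0 1 :=
      ⟨1/2, ⟨by norm_num, by norm_num⟩, rfl⟩
    have hH : Hmf κ θ lam (1/2) < 0 := lt_of_le_of_lt (le_csSup himgbdd hmem) hsup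
    have hH' : Hmf κ θ lam (1/2) = -1 + lam * binTail κ (1/2) θ := by
      unfold Hmf; norm_num
    rw [hH'] at hH
    have h2 : lam * (1/2) ^ κ ≤ lam * binTail κ (1/2) θ :=
      mul_le_mul_of_nonneg_left hbin_half hlam0
    have h3 : (2:ℝ) ^ κ * (1/2:ℝ) ^ κ = 1 := by
      rw [← mul_pow]; norm_num
    nlinarith [pow_pos (by norm_num : (0:ℝ) < 1/2) κ]
  constructor
  · -- Positivity : lam0 = (2 * 2^κ)⁻¹ ∈ S
    set lam0 : ℝ := (2 * 2 ^ κ)⁻¹ with hlam0def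
    have hlam0pos : 0 < lam0 := by positivity
    have hmemS : lam0 ∈ S := by
      refine ⟨hlam0pos.le, ?_⟩
      have hle : ∀ y ∈ (fun x => Hmf κ θ lam0 x) '' Set.Ioc 0 1, y ≤ -(1/2 : ℝ) := by
        rintro y ⟨x, ⟨hx0, hx1⟩, rfl⟩
        have hbn := binTail_nonneg κ θ hx0.le hx1
        have hb := binTail_le κ θ hx0.le hx1
        have hkey : ((1 - x) / x) * binTail κ x θ ≤ 2 ^ κ := by
          have h1 : (1 - x) / x * binTail κ x θ ≤ 1 / x * (2 ^ κ * x ^ θ) := by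
            apply mul_le_mul _ hb hbn (by positivity)
            exact div_le_div_of_nonneg_right (by linarith) hx0.le
          have heq : 1 / x * (2 ^ κ * x ^ θ) = 2 ^ κ * x ^ (θ - 1) := by
            have hxθ : x ^ θ = x * x ^ (θ - 1) := by
              rw [← pow_succ']
              congr 1
              omega
            rw [hxθ]
            field_simp
          have h2 : x ^ (θ - 1) ≤ 1 := pow_le_one₀ hx0.le hx1
          calc (1 - x) / x * binTail κ x θ ≤ 1 / x * (2 ^ κ * x ^ θ) := h1
            _ = 2 ^ κ * x ^ (θ - 1) := heq
            _ ≤ 2 ^ κ * 1 := by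
                apply mul_le_mul_of_nonneg_left h2 (by positivity)
            _ = 2 ^ κ := by ring
        have h3 : lam0 * (((1 - x) / x) * binTail κ x θ) ≤ lam0 * 2 ^ κ :=
          mul_le_mul_of_nonneg_left hkey hlam0pos.le
        have h4 : lam0 * 2 ^ κ = 1 / 2 := by
          rw [hlam0def]
          field_simp
        simp only [Hmf]
        nlinarith
      have hne : ((fun x => Hmf κ θ lam0 x) '' Set.Ioc 0 1).Nonempty :=
        ⟨Hmf κ θ lam0 1, 1, ⟨by norm_num, le_refl 1⟩, rfl⟩
      have := csSup_le hne hle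
      linarith
    have hle2 : lam0 ≤ lambdaMF κ θ := le_csSup hbdd hmemS
    linarith
  · exact hbdd
end

section
/- For all integers κ ≥ θ ≥ 2 and every real λ ≥ λ_c^MF(κ,θ), the mean-field critical density satisfies 0 < p_c^MF(κ,θ,λ) < 1. -/
/-- p_c^MF(κ,θ,λ) = inf{x ∈ (0,1] : H(κ,θ,λ;x) ≥ 0}. -/
noncomputable def pcMF (κ θ : ℕ) (lam : ℝ) : ℝ :=
  sInf {x ∈ Set.Ioc (0:ℝ) 1 | 0 ≤ Hmf κ θ lam x}

noncomputable def gmf (κ θ : ℕ) (x : ℝ) : ℝ :=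
  (1 - x) * ∑ i ∈ Finset.Icc θ κ, (κ.choose i : ℝ) * x ^ (i - 1) * (1 - x) ^ (κ - i)

lemma gmf_cont (κ θ : ℕ) : Continuous (gmf κ θ) := by
  unfold gmf; fun_prop

lemma Hmf_eq (κ θ : ℕ) (hθ : 1 ≤ θ) (lam x : ℝ) (hx : x ≠ 0) :
    Hmf κ θ lam x = -1 + lam * gmf κ θ x := by
  unfold Hmf binTail gmf
  have h : ∑ i ∈ Finset.Icc θ κ, (κ.choose i : ℝ) * x ^ i * (1 - x) ^ (κ - i)
      = x * ∑ i ∈ Finset.Icc θ κ, (κ.choose i : ℝ) * x ^ (i - 1) * (1 - x) ^ (κ - i) := by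
    rw [Finset.mul_sum]
    refine Finset.sum_congr rfl fun i hi => ?_
    have hi1 : 1 ≤ i := le_trans hθ (Finset.mem_Icc.mp hi).1
    have hpow : x ^ i = x * x ^ (i - 1) := by
      conv_lhs => rw [show i = (i-1) + 1 from (Nat.succ_pred_eq_of_pos hi1).symm]
      rw [pow_succ]; ring
    rw [hpow]; ring
  rw [h]
  field_simp

lemma gmf_zero (κ θ : ℕ) (hθ : 2 ≤ θ) : gmf κ θ 0 = 0 := by
  unfold gmf
  rw [Finset.sum_eq_zero]
  · ring
  intro i hi
  have hi2 : 2 ≤ i := le_trans hθ (Finset.mem_Icc.mp hi).1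
  have : (0:ℝ) ^ (i - 1) = 0 := by
    apply zero_pow; omega
  rw [this]; ring

lemma gmf_one (κ θ : ℕ) : gmf κ θ 1 = 0 := by
  unfold gmf; simp

lemma gmf_half_pos (κ θ : ℕ) (hκθ : θ ≤ κ) : 0 < gmf κ θ (1/2) := by
  unfold gmf
  have h1 : (0:ℝ) < 1 - 1/2 := by norm_num
  apply mul_pos h1
  apply Finset.sum_pos
  · intro i hi
    have hik : i ≤ κ := (Finset.mem_Icc.mp hi).2
    have : 0 < (κ.choose i : ℝ) := by
      exact_mod_cast Nat.choose_pos hik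
    positivity
  · exact ⟨θ, Finset.mem_Icc.mpr ⟨le_refl θ, hκθ⟩⟩

lemma gmf_le (κ θ : ℕ) (hθ : 2 ≤ θ) (x : ℝ) (hx0 : 0 ≤ x) (hx1 : x ≤ 1) :
    gmf κ θ x ≤ x * 2 ^ κ := by
  unfold gmf
  have h1x0 : 0 ≤ 1 - x := by linarith
  have h1x1 : 1 - x ≤ 1 := by linarith
  calc (1 - x) * ∑ i ∈ Finset.Icc θ κ, (κ.choose i : ℝ) * x ^ (i - 1) * (1 - x) ^ (κ - i)
      ≤ 1 * ∑ i ∈ Finset.Icc θ κ, (κ.choose i : ℝ) * x := by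
        apply mul_le_mul h1x1 ?_ ?_ zero_le_one
        · apply Finset.sum_le_sum
          intro i hi
          have hi2 : 2 ≤ i := le_trans hθ (Finset.mem_Icc.mp hi).1
          have hc : (0:ℝ) ≤ (κ.choose i : ℝ) := Nat.cast_nonneg _
          have hxp : x ^ (i-1) ≤ x := by
            calc x ^ (i-1) ≤ x ^ 1 := pow_le_pow_of_le_one hx0 hx1 (by omega)
            _ = x := pow_one x
          have h1xp : (1-x) ^ (κ - i) ≤ 1 := pow_le_one₀ h1x0 h1x1
          have hxpnn : 0 ≤ x ^ (i-1) := pow_nonneg hx0 _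
          calc (κ.choose i : ℝ) * x ^ (i - 1) * (1 - x) ^ (κ - i)
              ≤ (κ.choose i : ℝ) * x ^ (i - 1) * 1 :=
                mul_le_mul_of_nonneg_left h1xp (by positivity)
            _ = (κ.choose i : ℝ) * x ^ (i - 1) := by ring
            _ ≤ (κ.choose i : ℝ) * x := mul_le_mul_of_nonneg_left hxp hc
        · apply Finset.sum_nonneg
          intro i hi
          have h1 : (0:ℝ) ≤ (κ.choose i : ℝ) := Nat.cast_nonneg _
          positivity
    _ = (∑ i ∈ Finset.Icc θ κ, (κ.choose i : ℝ)) * x := by rw [one_mul, ← Finset.sum_mul]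
    _ ≤ (2 ^ κ : ℝ) * x := by
        apply mul_le_mul_of_nonneg_right ?_ hx0
        have hsub : Finset.Icc θ κ ⊆ Finset.range (κ+1) := by
          intro i hi
          simp only [Finset.mem_range]
          have := (Finset.mem_Icc.mp hi).2; omega
        calc (∑ i ∈ Finset.Icc θ κ, (κ.choose i : ℝ))
            ≤ ∑ i ∈ Finset.range (κ+1), (κ.choose i : ℝ) :=
              Finset.sum_le_sum_of_subset_of_nonneg hsub (fun i _ _ => Nat.cast_nonneg _)
          _ = (2:ℝ) ^ κ := by
              rw [← Nat.cast_sum]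
              rw [Nat.sum_range_choose]
              push_cast; ring
    _ = x * 2 ^ κ := by ring

theorem stmt2 (κ θ : ℕ) (hθ : 2 ≤ θ) (hκθ : θ ≤ κ) (lam : ℝ)
    (hlam : lambdaMF κ θ ≤ lam) :
    0 < pcMF κ θ lam ∧ pcMF κ θ lam < 1 := by
  have hθ1 : 1 ≤ θ := by omega
  -- maximum of gmf on [0,1]
  obtain ⟨x₀, hx₀mem, hx₀max⟩ :=
    isCompact_Icc.exists_isMaxOn (Set.nonempty_Icc.mpr zero_le_one)
      (gmf_cont κ θ).continuousOn
  set G := gmf κ θ x₀ with hG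
  have hhalf : (1/2 : ℝ) ∈ Set.Icc (0:ℝ) 1 := by norm_num
  have hGpos : 0 < G := lt_of_lt_of_le (gmf_half_pos κ θ hκθ) (hx₀max hhalf)
  have hx₀0 : 0 < x₀ := by
    rcases lt_or_eq_of_le hx₀mem.1 with h | h
    · exact h
    · exfalso; rw [hG, ← h, gmf_zero κ θ hθ] at hGpos; exact lt_irrefl 0 hGpos
  have hx₀1 : x₀ < 1 := by
    rcases lt_or_eq_of_le hx₀mem.2 with h | h
    · exact h
    · exfalso; rw [hG, h, gmf_one κ θ] at hGpos; exact lt_irrefl 0 hGpos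
  have hx₀Ioc : x₀ ∈ Set.Ioc (0:ℝ) 1 := ⟨hx₀0, le_of_lt hx₀1⟩
  -- S characterization
  set S := {lam : ℝ | 0 ≤ lam ∧ sSup ((fun x => Hmf κ θ lam x) '' Set.Ioc 0 1) < 0} with hS
  have hub : ∀ l ∈ S, l ≤ 1 / G := by
    rintro l ⟨hl0, hlsup⟩
    by_contra h
    push_neg at h
    have hbdd : BddAbove ((fun x => Hmf κ θ l x) '' Set.Ioc 0 1) := by
      by_contra hnb
      rw [Real.sSup_of_not_bddAbove hnb] at hlsup
      exact lt_irrefl 0 hlsup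
    have hmem : Hmf κ θ l x₀ ∈ (fun x => Hmf κ θ l x) '' Set.Ioc 0 1 :=
      ⟨x₀, hx₀Ioc, rfl⟩
    have hle : Hmf κ θ l x₀ < 0 := lt_of_le_of_lt (le_csSup hbdd hmem) hlsup
    rw [Hmf_eq κ θ hθ1 l x₀ (ne_of_gt hx₀0)] at hle
    have : 1 < l * G := by
      rw [div_lt_iff₀ hGpos] at h; linarith [h]
    linarith
  have hSbdd : BddAbove S := ⟨1/G, hub⟩
  have hsub : Set.Ico (0:ℝ) (1/G) ⊆ S := by
    rintro l ⟨hl0, hl⟩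
    refine ⟨hl0, ?_⟩
    have hne : ((fun x => Hmf κ θ l x) '' Set.Ioc 0 1).Nonempty :=
      ⟨Hmf κ θ l 1, ⟨1, Set.right_mem_Ioc.mpr one_pos, rfl⟩⟩
    have hbound : ∀ y ∈ (fun x => Hmf κ θ l x) '' Set.Ioc 0 1, y ≤ -1 + l * G := by
      rintro y ⟨x, hx, rfl⟩
      show Hmf κ θ l x ≤ -1 + l * G
      rw [Hmf_eq κ θ hθ1 l x (ne_of_gt hx.1)]
      have : gmf κ θ x ≤ G := hx₀max ⟨le_of_lt hx.1, hx.2⟩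
      nlinarith
    have h2 : -1 + l * G < 0 := by
      have : l * G < 1 := (lt_div_iff₀ hGpos).mp hl
      linarith
    exact lt_of_le_of_lt (csSup_le hne hbound) h2
  have hlamG : 1 / G ≤ lambdaMF κ θ := by
    have h1 : (0:ℝ) < 1 / G := by positivity
    calc (1:ℝ)/G = sSup (Set.Ico (0:ℝ) (1/G)) := (csSup_Ico h1).symm
      _ ≤ sSup S := csSup_le_csSup hSbdd (Set.nonempty_Ico.mpr h1) hsub
      _ = lambdaMF κ θ := rfl
  have hlamG' : 1 / G ≤ lam := le_trans hlamG hlam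
  have hlampos : 0 < lam := lt_of_lt_of_le (by positivity) hlamG'
  have hlG : 1 ≤ lam * G := (div_le_iff₀ hGpos).mp hlamG'
  -- x₀ is in the pcMF set
  set T := {x ∈ Set.Ioc (0:ℝ) 1 | 0 ≤ Hmf κ θ lam x} with hT
  have hx₀T : x₀ ∈ T := by
    refine ⟨hx₀Ioc, ?_⟩
    rw [Hmf_eq κ θ hθ1 lam x₀ (ne_of_gt hx₀0)]
    linarith
  have hTbddBelow : BddBelow T := ⟨0, fun x hx => le_of_lt hx.1.1⟩
  have hεbound : ∀ x ∈ T, 1 / (lam * 2 ^ κ) ≤ x := by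
    rintro x ⟨⟨hx0, hx1⟩, hHx⟩
    rw [Hmf_eq κ θ hθ1 lam x (ne_of_gt hx0)] at hHx
    have hg : gmf κ θ x ≤ x * 2 ^ κ := gmf_le κ θ hθ x (le_of_lt hx0) hx1
    have h1 : 1 ≤ lam * (x * 2 ^ κ) := by nlinarith
    rw [div_le_iff₀ (by positivity)]
    nlinarith
  constructor
  · have : 1 / (lam * 2 ^ κ) ≤ pcMF κ θ lam := le_csInf ⟨x₀, hx₀T⟩ hεbound
    have hpos : (0:ℝ) < 1 / (lam * 2 ^ κ) := by positivity
    linarith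
  · exact lt_of_le_of_lt (csInf_le hTbddBelow hx₀T) hx₀1
end

section
/- (Proposition 2, survival branch.) Let κ ≥ θ ≥ 2 be integers, λ ≥ 0 a real, and p ∈ (0,1]. Let ρ : [0,∞) → (0,1] be differentiable with ρ(0) = p, satisfying the mean-field equation ρ'(t) = −ρ(t) + λ·(1−ρ(t))·Bin(κ,ρ(t),θ) for all t ≥ 0. If λ ≥ λ_c^MF(κ,θ) and p ≥ p_c^MF(κ,θ,λ), then ρ(t) ≥ p_c^MF(κ,θ,λ) > 0 for all t ≥ 0. -/
/-!
Write `H(λ, x) = -1 + λ G(x)`, where `G(x) = (1 - x) Bin(κ, x, θ) / x` is a polynomial vanishing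
at `0` (as `θ ≥ 2`) and positive on `(0, 1)`. If `G` attains its maximum `M` on `[0, 1]` at `x₀`,
then `sup H(λ, ·) = -1 + λ M`, so `λ_c = M⁻¹` and `λ ≥ λ_c` gives `H(λ, x₀) ≥ 0`. The set
`{H(λ, ·) ≥ 0}` is then a nonempty closed subset of `(0, 1]`, so it contains its infimum `p_c`,
and `H(λ, ·) < 0` on `(0, p_c)` forces `H(λ, p_c) = 0`. Since the drift of the mean-field equation
is `x H(λ, x)`, `p_c` is an equilibrium, and a solution starting above it cannot cross it by
uniqueness of solutions of the (locally Lipschitz) equation.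
-/

open Set Filter Topology

theorem le_of_hasDerivAt_of_equilibrium {F ρ : ℝ → ℝ} {K : NNReal} {s : Set ℝ} {c : ℝ}
    (hF : LipschitzOnWith K F s) (hcs : c ∈ s) (hFc : F c = 0)
    (hρs : ∀ t, 0 ≤ t → ρ t ∈ s) (hρ : ∀ t, 0 ≤ t → HasDerivAt ρ (F (ρ t)) t)
    (h0 : c ≤ ρ 0) {t : ℝ} (ht : 0 ≤ t) : c ≤ ρ t := by
  by_contra! hlt
  have hcont : ContinuousOn ρ (Icc 0 t) := fun u hu =>
    (hρ u hu.1).continuousAt.continuousWithinAt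
  obtain ⟨u, hu, hρu⟩ := intermediate_value_Icc' ht hcont ⟨hlt.le, h0⟩
  have hconst : EqOn ρ (fun _ => c) (Icc u t) :=
    ODE_solution_unique_of_mem_Icc_right (v := fun _ => F) (s := fun _ => s) (fun _ _ => hF)
      (hcont.mono (Icc_subset_Icc_left hu.1))
      (fun r hr => (hρ r (hu.1.trans hr.1)).hasDerivWithinAt)
      (fun r hr => hρs r (hu.1.trans hr.1))
      continuousOn_const
      (fun r _ => by simpa [hFc] using hasDerivWithinAt_const r (Ici r) c)
      (fun _ _ => hcs) hρu
  exact hlt.ne (hconst (right_mem_Icc.2 hu.2))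

/-- `(1 - x) / x * binTail κ x θ` with the factor `x` cancelled, so that it is a polynomial. -/
noncomputable def binTailRatio (κ θ : ℕ) (x : ℝ) : ℝ :=
  (1 - x) * ∑ i ∈ Finset.Icc θ κ, (κ.choose i : ℝ) * x ^ (i - 1) * (1 - x) ^ (κ - i)

section

variable {κ θ : ℕ}

theorem mul_binTailRatio (hθ : 1 ≤ θ) (x : ℝ) :
    x * binTailRatio κ θ x = (1 - x) * binTail κ x θ := by
  rw [binTailRatio, binTail, mul_left_comm, Finset.mul_sum]
  congr 1
  refine Finset.sum_congr rfl fun i hi => ?_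
  obtain ⟨j, rfl⟩ : ∃ j, i = j + 1 := ⟨i - 1, by have := (Finset.mem_Icc.1 hi).1; omega⟩
  rw [Nat.add_sub_cancel]
  ring

theorem Hmf_eq_binTailRatio (hθ : 1 ≤ θ) (lam : ℝ) {x : ℝ} (hx : x ≠ 0) :
    Hmf κ θ lam x = -1 + lam * binTailRatio κ θ x := by
  rw [Hmf, ← mul_div_cancel_left₀ (binTailRatio κ θ x) hx, mul_binTailRatio hθ]
  ring

theorem continuous_binTailRatio : Continuous (binTailRatio κ θ) := by
  unfold binTailRatio
  fun_prop

theorem binTailRatio_zero (hθ : 2 ≤ θ) : binTailRatio κ θ 0 = 0 := by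
  rw [binTailRatio, Finset.sum_eq_zero fun i hi => ?_, mul_zero]
  rw [zero_pow (by have := (Finset.mem_Icc.1 hi).1; omega)]
  ring

theorem binTailRatio_pos (hθκ : θ ≤ κ) {x : ℝ} (hx : x ∈ Ioo 0 1) : 0 < binTailRatio κ θ x := by
  obtain ⟨hx0, hx1⟩ := hx
  refine mul_pos (sub_pos.2 hx1) (Finset.sum_pos (fun i hi => ?_) (Finset.nonempty_Icc.2 hθκ))
  have : (0 : ℝ) < κ.choose i := by exact_mod_cast Nat.choose_pos (Finset.mem_Icc.1 hi).2
  have : (0 : ℝ) < 1 - x := sub_pos.2 hx1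
  positivity

theorem exists_isMaxOn_binTailRatio (hθ : 2 ≤ θ) (hθκ : θ ≤ κ) :
    ∃ x₀ ∈ Ioc (0 : ℝ) 1, IsMaxOn (binTailRatio κ θ) (Icc 0 1) x₀ ∧ 0 < binTailRatio κ θ x₀ := by
  obtain ⟨x₀, hx₀, hmax⟩ := isCompact_Icc.exists_isMaxOn (nonempty_Icc.2 zero_le_one)
    (continuous_binTailRatio (κ := κ) (θ := θ)).continuousOn
  have hpos : 0 < binTailRatio κ θ x₀ :=
    (binTailRatio_pos hθκ (by norm_num : (1 / 2 : ℝ) ∈ Ioo 0 1)).trans_le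
      (hmax (by norm_num : (1 / 2 : ℝ) ∈ Icc 0 1))
  have hx₀0 : x₀ ≠ 0 := by
    rintro rfl
    rw [binTailRatio_zero hθ] at hpos
    exact hpos.false
  exact ⟨x₀, ⟨hx₀.1.lt_of_ne' hx₀0, hx₀.2⟩, hmax, hpos⟩

theorem isGreatest_image_Hmf (hθ : 1 ≤ θ) {x₀ : ℝ} (hx₀ : x₀ ∈ Ioc 0 1)
    (hmax : IsMaxOn (binTailRatio κ θ) (Icc 0 1) x₀) {μ : ℝ} (hμ : 0 ≤ μ) :
    IsGreatest (Hmf κ θ μ '' Ioc 0 1) (-1 + μ * binTailRatio κ θ x₀) := by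
  refine ⟨⟨x₀, hx₀, Hmf_eq_binTailRatio hθ μ hx₀.1.ne'⟩, ?_⟩
  rintro _ ⟨x, hx, rfl⟩
  rw [Hmf_eq_binTailRatio hθ μ hx.1.ne']
  gcongr
  exact hmax (Ioc_subset_Icc_self hx)

theorem lambdaMF_eq_inv (hθ : 1 ≤ θ) {x₀ : ℝ} (hx₀ : x₀ ∈ Ioc 0 1)
    (hmax : IsMaxOn (binTailRatio κ θ) (Icc 0 1) x₀) (hpos : 0 < binTailRatio κ θ x₀) :
    lambdaMF κ θ = (binTailRatio κ θ x₀)⁻¹ := by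
  have hsub : {lam : ℝ | 0 ≤ lam ∧ sSup ((fun x => Hmf κ θ lam x) '' Ioc 0 1) < 0} =
      Ico 0 (binTailRatio κ θ x₀)⁻¹ := by
    ext μ
    refine and_congr_right fun hμ => ?_
    rw [(isGreatest_image_Hmf hθ hx₀ hmax hμ).csSup_eq, ← one_div, lt_div_iff₀ hpos]
    constructor <;> intro h <;> linarith
  rw [lambdaMF, hsub, csSup_Ico (by positivity)]

theorem pcMF_mem (hθ : 2 ≤ θ) {lam : ℝ}
    (hne : {x ∈ Ioc (0 : ℝ) 1 | 0 ≤ Hmf κ θ lam x}.Nonempty) :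
    pcMF κ θ lam ∈ {x ∈ Ioc (0 : ℝ) 1 | 0 ≤ Hmf κ θ lam x} := by
  have hset : {x ∈ Ioc (0 : ℝ) 1 | 0 ≤ Hmf κ θ lam x} =
      Icc 0 1 ∩ {x | 1 ≤ lam * binTailRatio κ θ x} := by
    ext x
    constructor
    · rintro ⟨hx, hH⟩
      rw [Hmf_eq_binTailRatio (by omega) lam hx.1.ne'] at hH
      exact ⟨Ioc_subset_Icc_self hx, show 1 ≤ lam * binTailRatio κ θ x by linarith⟩
    · rintro ⟨hx, hG : 1 ≤ lam * binTailRatio κ θ x⟩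
      have hx0 : x ≠ 0 := by
        rintro rfl
        rw [binTailRatio_zero hθ, mul_zero] at hG
        norm_num at hG
      refine ⟨⟨hx.1.lt_of_ne' hx0, hx.2⟩, ?_⟩
      rw [Hmf_eq_binTailRatio (by omega) lam hx0]
      linarith
  rw [hset] at hne
  rw [pcMF, hset]
  have hG : Continuous fun x => lam * binTailRatio κ θ x :=
    continuous_const.mul continuous_binTailRatio
  exact (isClosed_Icc.inter (isClosed_le continuous_const hG)).csInf_mem hne
    ⟨0, fun x hx => hx.1.1⟩

theorem Hmf_pcMF_eq_zero (hθ : 2 ≤ θ) {lam : ℝ}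
    (hne : {x ∈ Ioc (0 : ℝ) 1 | 0 ≤ Hmf κ θ lam x}.Nonempty) :
    Hmf κ θ lam (pcMF κ θ lam) = 0 := by
  obtain ⟨⟨hpc0, hpc1⟩, hH⟩ := pcMF_mem hθ hne
  refine le_antisymm ?_ hH
  rw [Hmf_eq_binTailRatio (by omega) lam hpc0.ne']
  suffices lam * binTailRatio κ θ (pcMF κ θ lam) ≤ 1 by linarith
  have hlim : Tendsto (fun x => lam * binTailRatio κ θ x) (𝓝[<] pcMF κ θ lam)
      (𝓝 (lam * binTailRatio κ θ (pcMF κ θ lam))) :=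
    ((continuous_const.mul continuous_binTailRatio).tendsto _).mono_left nhdsWithin_le_nhds
  refine le_of_tendsto hlim (eventually_of_mem (Ioo_mem_nhdsLT hpc0) fun x hx => ?_)
  have hxS := notMem_of_lt_csInf hx.2 ⟨0, fun y hy => hy.1.1.le⟩
  have hxI : x ∈ Ioc (0 : ℝ) 1 := ⟨hx.1, hx.2.le.trans hpc1⟩
  have hHx : Hmf κ θ lam x < 0 := not_le.1 fun h => hxS ⟨hxI, h⟩
  rw [Hmf_eq_binTailRatio (by omega) lam hxI.1.ne'] at hHx
  linarith

end

theorem drift_eq_mul_Hmf (κ θ : ℕ) (lam : ℝ) {x : ℝ} (hx : x ≠ 0) :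
    -x + lam * (1 - x) * binTail κ x θ = x * Hmf κ θ lam x := by
  rw [Hmf]
  field_simp

theorem exists_lipschitzOnWith_drift (κ θ : ℕ) (lam : ℝ) :
    ∃ K, LipschitzOnWith K (fun x => -x + lam * (1 - x) * binTail κ x θ) (Icc 0 1) :=
  (ContDiff.locallyLipschitz (𝕂 := ℝ) (by unfold binTail; fun_prop)).locallyLipschitzOn
    |>.exists_lipschitzOnWith_of_compact isCompact_Icc

theorem stmt4_general (κ θ : ℕ) (hθ : 2 ≤ θ) (hκθ : θ ≤ κ) (lam : ℝ)
    (p : ℝ) (ρ : ℝ → ℝ)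
    (hρmem : ∀ t, 0 ≤ t → ρ t ∈ Set.Ioc (0:ℝ) 1)
    (hρ0 : ρ 0 = p)
    (hderiv : ∀ t, 0 ≤ t →
      HasDerivAt ρ (-ρ t + lam * (1 - ρ t) * binTail κ (ρ t) θ) t)
    (hcrit : lambdaMF κ θ ≤ lam) (hpcrit : pcMF κ θ lam ≤ p) :
    (∀ t, 0 ≤ t → pcMF κ θ lam ≤ ρ t) ∧ 0 < pcMF κ θ lam := by
  obtain ⟨x₀, hx₀, hmax, hpos⟩ := exists_isMaxOn_binTailRatio hθ hκθ
  have hne : {x ∈ Ioc (0 : ℝ) 1 | 0 ≤ Hmf κ θ lam x}.Nonempty := by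
    refine ⟨x₀, hx₀, ?_⟩
    rw [lambdaMF_eq_inv (by omega) hx₀ hmax hpos, inv_le_iff_one_le_mul₀' hpos] at hcrit
    rw [Hmf_eq_binTailRatio (by omega) lam hx₀.1.ne']
    linarith
  obtain ⟨⟨hpc0, hpc1⟩, -⟩ := pcMF_mem hθ hne
  have hequil : -pcMF κ θ lam + lam * (1 - pcMF κ θ lam) * binTail κ (pcMF κ θ lam) θ = 0 := by
    rw [drift_eq_mul_Hmf κ θ lam hpc0.ne', Hmf_pcMF_eq_zero hθ hne, mul_zero]
  obtain ⟨K, hK⟩ := exists_lipschitzOnWith_drift κ θ lam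
  exact ⟨fun t ht => le_of_hasDerivAt_of_equilibrium hK ⟨hpc0.le, hpc1⟩ hequil
    (fun s hs => Ioc_subset_Icc_self (hρmem s hs)) hderiv (hρ0 ▸ hpcrit) ht, hpc0⟩

/-- Proposition 2, survival branch. -/
theorem stmt4 (κ θ : ℕ) (hθ : 2 ≤ θ) (hκθ : θ ≤ κ) (lam : ℝ) (hlam : 0 ≤ lam)
    (p : ℝ) (hp : p ∈ Set.Ioc (0:ℝ) 1) (ρ : ℝ → ℝ)
    (hρmem : ∀ t, 0 ≤ t → ρ t ∈ Set.Ioc (0:ℝ) 1)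
    (hρ0 : ρ 0 = p)
    (hderiv : ∀ t, 0 ≤ t →
      HasDerivAt ρ (-ρ t + lam * (1 - ρ t) * binTail κ (ρ t) θ) t)
    (hcrit : lambdaMF κ θ ≤ lam) (hpcrit : pcMF κ θ lam ≤ p) :
    (∀ t, 0 ≤ t → pcMF κ θ lam ≤ ρ t) ∧ 0 < pcMF κ θ lam :=
  stmt4_general κ θ hθ hκθ lam p ρ hρmem hρ0 hderiv hcrit hpcrit
end

section
/- For every integer θ ≥ 1, sup_{γ > 0} |Bin(κ, γ/κ, θ) − Poisson(γ,θ)| → 0 as the integer κ → ∞; that is, the binomial tail Bin(κ, γ/κ, θ) converges to the Poisson tail Poisson(γ,θ) uniformly in γ > 0. -/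
/-- Bin with the convention Bin(κ,x,θ) = 1 for x > 1. -/
noncomputable def binTailExt (κ : ℕ) (x : ℝ) (θ : ℕ) : ℝ :=
  if x ≤ 1 then binTail κ x θ else 1

/-- Poisson(γ,θ) = ∑_{i=θ}^{∞} e^{−γ} γ^i / i!. -/
noncomputable def poissonTail (γ : ℝ) (θ : ℕ) : ℝ :=
  ∑' i : ℕ, Real.exp (-γ) * γ ^ (θ + i) / (θ + i).factorial

/-!
Both tails are `1` minus the sum of the first `θ` point probabilities, so it suffices to compare
the binomial and Poisson point probabilities `bᵢ` and `pᵢ` for each fixed `i < θ`, with `t = γ/κ`.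
For `γ ≤ κ`, `C(κ,i) ≤ κⁱ/i!` and `1 - t ≤ exp (-t)` give `bᵢ ≤ pᵢ exp (iγ/κ)`, while
`1 - t ≥ exp (-t) (1 - t²)` and Bernoulli's inequality give `bᵢ ≥ pᵢ (1 - (i² + γ²)/κ)`.
Because `γᵐ exp (-γ) ≤ m!`, both errors are `O(1/κ)` uniformly in `γ`. For `γ > κ` the binomial
tail is `1` by convention, and `pᵢ ≤ (i + 1)/γ < (i + 1)/κ`.
-/

open Finset Real

noncomputable def binomialTerm (κ i : ℕ) (x : ℝ) : ℝ :=
  κ.choose i * x ^ i * (1 - x) ^ (κ - i)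

noncomputable def poissonTerm (γ : ℝ) (i : ℕ) : ℝ :=
  exp (-γ) * γ ^ i / i.factorial

theorem sum_range_binomialTerm (κ : ℕ) (x : ℝ) :
    ∑ i ∈ range (κ + 1), binomialTerm κ i x = 1 := by
  have h := add_pow x (1 - x) κ
  rw [add_sub_cancel, one_pow] at h
  exact (sum_congr rfl fun i _ => by rw [binomialTerm]; ring).trans h.symm

theorem binTail_eq_one_sub_sum {κ θ : ℕ} (hθ : θ ≤ κ) (x : ℝ) :
    binTail κ x θ = 1 - ∑ i ∈ range θ, binomialTerm κ i x := by
  rw [← sum_range_binomialTerm κ x, ← sum_range_add_sum_Ico _ (by omega : θ ≤ κ + 1),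
    binTail, ← Ico_add_one_right_eq_Icc]
  simp only [binomialTerm, add_sub_cancel_left]

theorem binTailExt_eq_one_sub_sum {κ θ : ℕ} (hθ : θ ≤ κ) (x : ℝ) :
    binTailExt κ x θ = 1 - ∑ i ∈ range θ, if x ≤ 1 then binomialTerm κ i x else 0 := by
  unfold binTailExt
  split_ifs <;> simp [binTail_eq_one_sub_sum hθ]

theorem hasSum_poissonTerm (γ : ℝ) : HasSum (poissonTerm γ) 1 := by
  have h := (NormedSpace.expSeries_div_hasSum_exp γ).mul_left (exp (-γ))
  rw [← exp_eq_exp_ℝ, ← exp_add, neg_add_cancel, exp_zero] at h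
  simp only [← mul_div_assoc] at h
  exact h

theorem poissonTail_eq_one_sub_sum (γ : ℝ) (θ : ℕ) :
    poissonTail γ θ = 1 - ∑ i ∈ range θ, poissonTerm γ i := by
  rw [← (hasSum_poissonTerm γ).tsum_eq, ← (hasSum_poissonTerm γ).summable.sum_add_tsum_nat_add θ]
  simp [poissonTail, poissonTerm, add_comm]

theorem pow_mul_exp_neg_le_factorial {γ : ℝ} (hγ : 0 ≤ γ) (m : ℕ) :
    γ ^ m * exp (-γ) ≤ m.factorial := by
  have := pow_div_factorial_le_exp _ hγ m
  rw [div_le_iff₀ (by positivity)] at this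
  rw [exp_neg, ← div_eq_mul_inv, div_le_iff₀ (exp_pos γ)]
  linarith

theorem poissonTerm_le {γ : ℝ} (hγ : 0 < γ) (i : ℕ) : poissonTerm γ i ≤ (i + 1) / γ := by
  have := pow_mul_exp_neg_le_factorial hγ.le (i + 1)
  rw [poissonTerm, div_le_div_iff₀ (by positivity) hγ]
  push_cast [Nat.factorial_succ, pow_succ] at this
  linarith

theorem exp_neg_mul_one_sub_sq_div_le_one_sub_div_pow {γ : ℝ} {n : ℕ} (hγ : 0 < γ) (hγn : γ ≤ n) :
    exp (-γ) * (1 - γ ^ 2 / n) ≤ (1 - γ / n) ^ n := by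
  have hn : (0 : ℝ) < n := hγ.trans_le hγn
  set t := γ / n
  have ht0 : 0 ≤ t := by positivity
  have ht1 : t ≤ 1 := (div_le_one hn).2 hγn
  -- `exp (-t) * (1 - t ^ 2) = exp (-t) * (1 + t) * (1 - t)` and `exp (-t) * (1 + t) ≤ 1`
  have hstep : exp (-t) * (1 - t ^ 2) ≤ 1 - t := by
    have h := add_one_le_exp t
    have hinv : exp (-t) * exp t = 1 := by rw [← exp_add, neg_add_cancel, exp_zero]
    nlinarith [exp_pos (-t)]
  have hnt : (n : ℝ) * t = γ := mul_div_cancel₀ γ hn.ne'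
  calc exp (-γ) * (1 - γ ^ 2 / n) = exp (-t) ^ n * (1 + n * -t ^ 2) := by
        rw [← exp_nat_mul, mul_neg, hnt, ← hnt]; field_simp; ring
    _ ≤ exp (-t) ^ n * (1 + -t ^ 2) ^ n :=
        mul_le_mul_of_nonneg_left (one_add_mul_le_pow (by nlinarith) n) (by positivity)
    _ = (exp (-t) * (1 - t ^ 2)) ^ n := by rw [mul_pow, sub_eq_add_neg]
    _ ≤ (1 - t) ^ n := pow_le_pow_left₀ (mul_nonneg (exp_pos _).le (by nlinarith)) hstep n

theorem pow_div_factorial_mul_one_sub_sq_div_le_choose {κ i : ℕ} (hi : i ≤ κ) :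
    (κ : ℝ) ^ i / i.factorial * (1 - i ^ 2 / κ) ≤ κ.choose i := by
  obtain rfl | hκ := eq_or_ne κ 0
  · simp [Nat.le_zero.1 hi]
  have hκ' : (0 : ℝ) < κ := by positivity
  have hiκ : (i : ℝ) / κ ≤ 1 := (div_le_one hκ').2 (by exact_mod_cast hi)
  refine le_trans ?_ (Nat.pow_le_choose i κ)
  rw [div_mul_eq_mul_div]
  gcongr
  calc (κ : ℝ) ^ i * (1 - i ^ 2 / κ) = κ ^ i * (1 + i * -(i / κ)) := by ring
    _ ≤ κ ^ i * (1 + -(i / κ)) ^ i :=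
        mul_le_mul_of_nonneg_left (one_add_mul_le_pow (by linarith) i) (by positivity)
    _ = (κ - i) ^ i := by rw [← mul_pow]; field_simp; ring
    _ ≤ ((κ + 1 - i : ℕ) : ℝ) ^ i := by
        gcongr
        · linarith [(div_le_one hκ').1 hiκ]
        · rw [Nat.cast_sub (by omega)]; push_cast; linarith

theorem binomialTerm_le {κ i : ℕ} {γ : ℝ} (hi : i ≤ κ) (hγ : 0 < γ) (hγκ : γ ≤ κ) :
    binomialTerm κ i (γ / κ) ≤ poissonTerm γ i * exp (i * γ / κ) := by
  have hκ : (0 : ℝ) < κ := hγ.trans_le hγκ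
  have hexp : ((κ - i : ℕ) : ℝ) * -(γ / κ) = -γ + i * γ / κ := by
    rw [Nat.cast_sub hi]; field_simp; ring
  calc binomialTerm κ i (γ / κ)
      ≤ (κ ^ i / i.factorial) * (γ / κ) ^ i * exp (-(γ / κ)) ^ (κ - i) := by
        have h1 : 0 ≤ 1 - γ / κ := by rw [sub_nonneg, div_le_one hκ]; exact hγκ
        unfold binomialTerm
        gcongr
        · exact Nat.choose_le_pow_div i κ
        · exact one_sub_le_exp_neg _
    _ = poissonTerm γ i * exp (i * γ / κ) := by
        rw [← exp_nat_mul, hexp, exp_add, poissonTerm, div_pow]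
        field_simp

theorem mul_mul_one_sub_add_le_mul {P E a b X Y : ℝ} (hP : 0 ≤ P) (hE : 0 ≤ E) (ha : 0 ≤ a)
    (hb : 0 ≤ b) (hX0 : 0 ≤ X) (hY0 : 0 ≤ Y) (hX : P * (1 - a) ≤ X) (hY : E * (1 - b) ≤ Y) :
    P * E * (1 - (a + b)) ≤ X * Y := by
  rcases le_or_gt b 1 with hb1 | hb1
  · calc P * E * (1 - (a + b)) ≤ P * (1 - a) * (E * (1 - b)) := by
          nlinarith [mul_nonneg (mul_nonneg hP hE) (mul_nonneg ha hb)]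
      _ ≤ X * Y := mul_le_mul hX hY (mul_nonneg hE (by linarith)) hX0
  · calc P * E * (1 - (a + b)) ≤ 0 :=
          mul_nonpos_of_nonneg_of_nonpos (mul_nonneg hP hE) (by linarith)
      _ ≤ X * Y := mul_nonneg hX0 hY0

theorem poissonTerm_mul_le_binomialTerm {κ i : ℕ} {γ : ℝ} (hi : i ≤ κ) (hγ : 0 < γ)
    (hγκ : γ ≤ κ) : poissonTerm γ i * (1 - (i ^ 2 + γ ^ 2) / κ) ≤ binomialTerm κ i (γ / κ) := by
  have hκ : (0 : ℝ) < κ := hγ.trans_le hγκ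
  have h1 : 0 ≤ 1 - γ / κ := by rw [sub_nonneg, div_le_one hκ]; exact hγκ
  have hX : γ ^ i / i.factorial * (1 - i ^ 2 / κ) ≤ κ.choose i * (γ / κ) ^ i := by
    have h := mul_le_mul_of_nonneg_right (pow_div_factorial_mul_one_sub_sq_div_le_choose hi)
      (pow_nonneg (div_nonneg hγ.le hκ.le) i)
    refine (le_of_eq ?_).trans h
    rw [div_pow]; field_simp
  have hY : exp (-γ) * (1 - γ ^ 2 / κ) ≤ (1 - γ / κ) ^ (κ - i) :=
    (exp_neg_mul_one_sub_sq_div_le_one_sub_div_pow hγ hγκ).trans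
      (pow_le_pow_of_le_one h1 (by linarith [div_nonneg hγ.le hκ.le]) (Nat.sub_le κ i))
  have h := mul_mul_one_sub_add_le_mul (by positivity) (exp_pos _).le (by positivity)
    (by positivity) (by positivity) (pow_nonneg h1 _) hX hY
  refine (le_of_eq ?_).trans h
  rw [poissonTerm, add_div]
  ring

theorem binomialTerm_sub_poissonTerm_le {κ i : ℕ} {γ : ℝ} (hi : i ≤ κ) (hγ : 0 < γ)
    (hγκ : γ ≤ κ) : binomialTerm κ i (γ / κ) - poissonTerm γ i ≤ i * (i + 1) * exp i / κ := by
  have hκ : (0 : ℝ) < κ := hγ.trans_le hγκ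
  set x := i * γ / κ with hx
  have hx0 : 0 ≤ x := by positivity
  have hxi : x ≤ i := by
    rw [hx, div_le_iff₀ hκ]; exact mul_le_mul_of_nonneg_left hγκ (Nat.cast_nonneg i)
  have hexp : exp x - 1 ≤ x * exp i := by
    have h := one_sub_le_exp_neg x
    have hinv : exp x * exp (-x) = 1 := by rw [← exp_add, add_neg_cancel, exp_zero]
    nlinarith [exp_le_exp.2 hxi, exp_pos x]
  have hp : 0 ≤ poissonTerm γ i := by unfold poissonTerm; positivity
  calc binomialTerm κ i (γ / κ) - poissonTerm γ i ≤ poissonTerm γ i * (exp x - 1) := by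
        linarith [binomialTerm_le hi hγ hγκ]
    _ ≤ poissonTerm γ i * (x * exp i) := mul_le_mul_of_nonneg_left hexp hp
    _ = γ ^ (i + 1) * exp (-γ) * (i * exp i / (κ * i.factorial)) := by
        rw [poissonTerm, hx, pow_succ]; field_simp
    _ ≤ (i + 1).factorial * (i * exp i / (κ * i.factorial)) :=
        mul_le_mul_of_nonneg_right (pow_mul_exp_neg_le_factorial hγ.le _) (by positivity)
    _ = i * (i + 1) * exp i / κ := by
        rw [Nat.factorial_succ]; push_cast; field_simp

theorem poissonTerm_sub_binomialTerm_le {κ i : ℕ} {γ : ℝ} (hi : i ≤ κ) (hγ : 0 < γ)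
    (hγκ : γ ≤ κ) :
    poissonTerm γ i - binomialTerm κ i (γ / κ) ≤ (i ^ 2 + (i + 1) * (i + 2)) / κ := by
  have hκ : (0 : ℝ) < κ := hγ.trans_le hγκ
  calc poissonTerm γ i - binomialTerm κ i (γ / κ) ≤ poissonTerm γ i * ((i ^ 2 + γ ^ 2) / κ) := by
        linarith [poissonTerm_mul_le_binomialTerm hi hγ hγκ]
    _ = (i ^ 2 * (γ ^ i * exp (-γ)) + γ ^ (i + 2) * exp (-γ)) / (κ * i.factorial) := by
        rw [poissonTerm, pow_add]; field_simp
    _ ≤ (i ^ 2 * i.factorial + (i + 2).factorial) / (κ * i.factorial) := by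
        gcongr
        · exact pow_mul_exp_neg_le_factorial hγ.le i
        · exact pow_mul_exp_neg_le_factorial hγ.le (i + 2)
    _ = (i ^ 2 + (i + 1) * (i + 2)) / κ := by
        rw [Nat.factorial_succ, Nat.factorial_succ]; push_cast; field_simp; ring

theorem exists_abs_ite_binomialTerm_sub_poissonTerm_le (i : ℕ) :
    ∃ C : ℝ, ∀ κ : ℕ, i ≤ κ → 0 < κ → ∀ γ : ℝ, 0 < γ →
      |(if γ / κ ≤ 1 then binomialTerm κ i (γ / κ) else 0) - poissonTerm γ i| ≤ C / κ := by
  refine ⟨i * (i + 1) * exp i + (i ^ 2 + (i + 1) * (i + 2)), fun κ hi hκ γ hγ => ?_⟩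
  have hκ' : (0 : ℝ) < κ := by exact_mod_cast hκ
  have hA : 0 ≤ (i : ℝ) * (i + 1) * exp i / κ := by positivity
  have hB : 0 ≤ ((i : ℝ) ^ 2 + (i + 1) * (i + 2)) / κ := by positivity
  rw [add_div]
  split_ifs with h
  · have hγκ : γ ≤ κ := (div_le_one hκ').1 h
    rw [abs_sub_le_iff]
    constructor
    · linarith [binomialTerm_sub_poissonTerm_le hi hγ hγκ]
    · linarith [poissonTerm_sub_binomialTerm_le hi hγ hγκ]
  · have hκγ : (κ : ℝ) < γ := by rwa [not_le, one_lt_div hκ'] at h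
    have hp : 0 ≤ poissonTerm γ i := by unfold poissonTerm; positivity
    rw [zero_sub, abs_neg, abs_of_nonneg hp]
    calc poissonTerm γ i ≤ (i + 1) / γ := poissonTerm_le hγ i
      _ ≤ (i + 1) / κ := by gcongr
      _ ≤ ((i : ℝ) ^ 2 + (i + 1) * (i + 2)) / κ := by gcongr ?_ / _; nlinarith
      _ ≤ _ := by linarith

theorem exists_abs_binTailExt_sub_poissonTail_le (θ : ℕ) :
    ∃ C : ℝ, ∀ κ : ℕ, θ ≤ κ → 0 < κ → ∀ γ : ℝ, 0 < γ →
      |binTailExt κ (γ / κ) θ - poissonTail γ θ| ≤ C / κ := by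
  choose C hC using exists_abs_ite_binomialTerm_sub_poissonTerm_le
  refine ⟨∑ i ∈ range θ, C i, fun κ hθ hκ γ hγ => ?_⟩
  rw [binTailExt_eq_one_sub_sum hθ, poissonTail_eq_one_sub_sum, sub_sub_sub_cancel_left,
    abs_sub_comm, ← sum_sub_distrib, sum_div]
  exact (abs_sum_le_sum_abs _ _).trans
    (sum_le_sum fun i hi => hC i κ (by rw [mem_range] at hi; omega) hκ γ hγ)

theorem stmt6_general (θ : ℕ) :
    ∀ ε : ℝ, 0 < ε → ∃ K : ℕ, ∀ κ : ℕ, K ≤ κ → ∀ γ : ℝ, 0 < γ →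
      |binTailExt κ (γ / κ) θ - poissonTail γ θ| < ε := by
  intro ε hε
  obtain ⟨C, hC⟩ := exists_abs_binTailExt_sub_poissonTail_le θ
  obtain ⟨N, hN⟩ := exists_nat_gt (C / ε)
  refine ⟨max θ (N + 1), fun κ hK γ hγ => ?_⟩
  have hNκ : N + 1 ≤ κ := le_of_max_le_right hK
  have hκ : 0 < κ := by omega
  calc |binTailExt κ (γ / κ) θ - poissonTail γ θ| ≤ C / κ :=
        hC κ (le_of_max_le_left hK) hκ γ hγ
    _ < ε := by
        rw [div_lt_iff₀ hε] at hN
        rw [div_lt_iff₀ (by exact_mod_cast hκ)]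
        nlinarith [show (N : ℝ) + 1 ≤ κ by exact_mod_cast hNκ]

/-- Bin(κ, γ/κ, θ) → Poisson(γ,θ) as κ → ∞, uniformly in γ > 0. -/
theorem stmt6 (θ : ℕ) (hθ : 1 ≤ θ) :
    ∀ ε : ℝ, 0 < ε → ∃ K : ℕ, ∀ κ : ℕ, K ≤ κ → ∀ γ : ℝ, 0 < γ →
      |binTailExt κ (γ / κ) θ - poissonTail γ θ| < ε :=
  stmt6_general θ
end

section
/- The constants Φ_θ satisfy: Φ_1 = 1, Φ_θ < Φ_{θ+1} for every integer θ ≥ 1 (so in particular 1 = Φ_1 < Φ_2 < Φ_3 < ⋯), and Φ_θ → ∞ as θ → ∞. -/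
open Filter

lemma summable_term (γ : ℝ) (θ : ℕ) :
    Summable (fun i : ℕ => Real.exp (-γ) * γ ^ (θ + i) / (θ + i).factorial) := by
  have h : Summable (fun n : ℕ => Real.exp (-γ) * γ ^ n / n.factorial) := by
    simpa [mul_div_assoc] using (Real.summable_pow_div_factorial γ).mul_left (Real.exp (-γ))
  exact h.comp_injective (add_right_injective θ)

lemma pt_zero (γ : ℝ) : poissonTail γ 0 = 1 := by
  unfold poissonTail
  simp only [Nat.zero_add, zero_add, mul_div_assoc]
  rw [tsum_mul_left]
  have : ∑' i : ℕ, γ ^ i / (i.factorial : ℝ) = Real.exp γ := by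
    rw [Real.exp_eq_exp_ℝ, NormedSpace.exp_eq_tsum_div]
  rw [this, ← Real.exp_add]
  simp

lemma pt_succ (γ : ℝ) (θ : ℕ) :
    poissonTail γ θ = Real.exp (-γ) * γ ^ θ / θ.factorial + poissonTail γ (θ + 1) := by
  unfold poissonTail
  rw [Summable.tsum_eq_zero_add (summable_term γ θ)]
  norm_num
  apply tsum_congr; intro i
  have : θ + (i + 1) = θ + 1 + i := by omega
  rw [this]

lemma pt_pos {γ : ℝ} (hγ : 0 < γ) (θ : ℕ) : 0 < poissonTail γ θ := by
  apply Summable.tsum_pos (summable_term γ θ) _ 0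
  · positivity
  · intro i; positivity

lemma pt_le_one {γ : ℝ} (hγ : 0 < γ) (θ : ℕ) : poissonTail γ θ ≤ 1 := by
  induction θ with
  | zero => rw [pt_zero]
  | succ n ih =>
    have h := pt_succ γ n
    have : 0 ≤ Real.exp (-γ) * γ ^ n / n.factorial := by positivity
    linarith

lemma pt_le_pow {γ : ℝ} (hγ : 0 < γ) (θ : ℕ) : poissonTail γ θ ≤ γ ^ θ := by
  have h : ∀ i : ℕ, Real.exp (-γ) * γ ^ (θ + i) / (θ + i).factorial
      ≤ γ ^ θ * (Real.exp (-γ) * γ ^ (0 + i) / (0 + i).factorial) := by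
    intro i
    have hr : γ ^ θ * (Real.exp (-γ) * γ ^ (0 + i) / (0 + i).factorial)
        = Real.exp (-γ) * γ ^ (θ + i) / i.factorial := by
      rw [zero_add, pow_add]; ring
    rw [hr]
    gcongr
    exact Nat.le_add_left i θ
  calc poissonTail γ θ ≤ ∑' i : ℕ, γ ^ θ * (Real.exp (-γ) * γ ^ (0 + i) / (0 + i).factorial) :=
        Summable.tsum_le_tsum h (summable_term γ θ) ((summable_term γ 0).mul_left _)
    _ = γ ^ θ * poissonTail γ 0 := by rw [tsum_mul_left]; rfl
    _ = γ ^ θ := by rw [pt_zero, mul_one]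

lemma pt_markov {γ : ℝ} (hγ : 0 < γ) (θ : ℕ) : (θ : ℝ) * poissonTail γ θ ≤ γ := by
  cases θ with
  | zero => simpa using hγ.le
  | succ s =>
    have h : ∀ i : ℕ, ((s+1:ℕ) : ℝ) * (Real.exp (-γ) * γ ^ (s + 1 + i) / (s + 1 + i).factorial)
        ≤ γ * (Real.exp (-γ) * γ ^ (s + i) / (s + i).factorial) := by
      intro i
      have hfac : ((s + 1 + i).factorial : ℝ) = (s + i + 1) * (s + i).factorial := by
        have : s + 1 + i = (s + i) + 1 := by omega
        rw [this, Nat.factorial_succ]; push_cast; ring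
      have hpow : γ ^ (s + 1 + i) = γ * γ ^ (s + i) := by
        have : s + 1 + i = (s + i) + 1 := by omega
        rw [this, pow_succ]; ring
      rw [hfac, hpow, mul_div_assoc', mul_div_assoc']
      rw [div_le_div_iff₀ (by positivity) (by positivity)]
      push_cast
      have key : (0:ℝ) ≤ Real.exp (-γ) * γ * γ ^ (s+i) * ((s+i).factorial : ℝ) * i := by positivity
      nlinarith [key]
    calc ((s+1:ℕ) : ℝ) * poissonTail γ (s+1)
        = ∑' i : ℕ, ((s+1:ℕ):ℝ) * (Real.exp (-γ) * γ ^ (s + 1 + i) / (s + 1 + i).factorial) := by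
          rw [tsum_mul_left]; rfl
      _ ≤ ∑' i : ℕ, γ * (Real.exp (-γ) * γ ^ (s + i) / (s + i).factorial) :=
          Summable.tsum_le_tsum h ((summable_term γ (s+1)).mul_left _) ((summable_term γ s).mul_left _)
      _ = γ * poissonTail γ s := by rw [tsum_mul_left]; rfl
      _ ≤ γ * 1 := by
          apply mul_le_mul_of_nonneg_left (pt_le_one hγ s) hγ.le
      _ = γ := mul_one γ

/-- Φ_θ = inf_{γ>0} γ / Poisson(γ,θ). -/
noncomputable def Phi (θ : ℕ) : ℝ :=
  sInf ((fun γ => γ / poissonTail γ θ) '' Set.Ioi 0)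

lemma phi_set_nonempty (θ : ℕ) : ((fun γ => γ / poissonTail γ θ) '' Set.Ioi 0).Nonempty :=
  ⟨_, ⟨1, by norm_num, rfl⟩⟩

lemma phi_set_bddBelow (θ : ℕ) : BddBelow ((fun γ => γ / poissonTail γ θ) '' Set.Ioi 0) := by
  refine ⟨0, fun x hx => ?_⟩
  obtain ⟨γ, hγ, rfl⟩ := hx
  have h1 := pt_pos hγ θ
  have h2 : (0:ℝ) < γ := hγ
  positivity

lemma nat_le_phi (θ : ℕ) : (θ : ℝ) ≤ Phi θ := by
  apply le_csInf (phi_set_nonempty θ)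
  rintro x ⟨γ, hγ, rfl⟩
  rw [le_div_iff₀ (pt_pos hγ θ)]
  exact pt_markov hγ θ

lemma phi_le (θ : ℕ) {γ : ℝ} (hγ : 0 < γ) : Phi θ ≤ γ / poissonTail γ θ :=
  csInf_le (phi_set_bddBelow θ) ⟨γ, hγ, rfl⟩

lemma pt_one (γ : ℝ) : poissonTail γ 1 = 1 - Real.exp (-γ) := by
  have h := pt_succ γ 0
  rw [pt_zero] at h
  simp at h
  linarith

lemma phi_one : Phi 1 = 1 := by
  refine le_antisymm ?_ (by exact_mod_cast nat_le_phi 1)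
  by_contra h
  push_neg at h
  set ε := Phi 1 - 1 with hε
  have hεpos : 0 < ε := by simp [hε]; linarith
  set γ := min 1 (ε / (2 * (1 + ε))) with hγdef
  have hγpos : 0 < γ := lt_min one_pos (by positivity)
  have hγ1 : γ ≤ 1 := min_le_left _ _
  have hγ2 : γ ≤ ε / (2 * (1 + ε)) := min_le_right _ _
  -- exp bound : exp(-γ) ≤ 1 - γ + (3/4) γ^2
  have hb := Real.exp_bound (x := -γ) (by rw [abs_neg, abs_of_pos hγpos]; exact hγ1) (n := 2) (by norm_num)
  have hsum : ∑ m ∈ Finset.range 2, (-γ) ^ m / (m.factorial : ℝ) = 1 - γ := by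
    simp [Finset.sum_range_succ]
    ring
  rw [hsum] at hb
  have habs : |(-γ)| = γ := by rw [abs_neg, abs_of_pos hγpos]
  rw [habs] at hb
  norm_num at hb
  have hexp : Real.exp (-γ) ≤ 1 - γ + γ ^ 2 * (3/4) := by
    have := abs_le.mp hb
    linarith [this.2]
  have hT : γ * (1 - (3/4) * γ) ≤ poissonTail γ 1 := by
    rw [pt_one]
    nlinarith
  have hTpos : 0 < poissonTail γ 1 := pt_pos hγpos 1
  have hq : (1 : ℝ) - (3/4) * γ ≥ 1/4 := by linarith
  have h1 : γ / poissonTail γ 1 ≤ 1 / (1 - (3/4) * γ) := by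
    rw [div_le_div_iff₀ hTpos (by linarith)]
    nlinarith
  have h2 : 1 / (1 - (3/4) * γ) < Phi 1 := by
    rw [div_lt_iff₀ (by linarith)]
    have : γ * (1 + ε) ≤ ε / 2 := by
      rw [hγdef]
      calc min 1 (ε / (2 * (1 + ε))) * (1 + ε) ≤ (ε / (2 * (1 + ε))) * (1 + ε) := by
            apply mul_le_mul_of_nonneg_right hγ2 (by linarith)
        _ = ε / 2 := by field_simp
    have hphi : Phi 1 = 1 + ε := by rw [hε]; ring
    rw [hphi]
    nlinarith
  have := phi_le 1 hγpos
  linarith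

lemma phi_lt_succ (θ : ℕ) (hθ : 1 ≤ θ) : Phi θ < Phi (θ + 1) := by
  have hphi1 : (1:ℝ) ≤ Phi θ := le_trans (by exact_mod_cast hθ) (nat_le_phi θ)
  set B : ℝ := Phi θ + 1 with hB
  have hBpos : 0 < B := by linarith
  set a : ℝ := min 1 (1 / B) with ha
  have hapos : 0 < a := lt_min one_pos (by positivity)
  have ha1 : a ≤ 1 := min_le_left _ _
  have haB : a ≤ 1 / B := min_le_right _ _
  set δ₀ : ℝ := a ^ (θ + 1) * Real.exp (-B) / θ.factorial with hδ₀
  have hδ₀pos : 0 < δ₀ := by positivity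
  set δ : ℝ := min 1 δ₀ with hδ
  have hδpos : 0 < δ := lt_min one_pos hδ₀pos
  have hδ1 : δ ≤ 1 := min_le_left _ _
  have hδδ₀ : δ ≤ δ₀ := min_le_right _ _
  have claim : ∀ γ : ℝ, 0 < γ → Phi θ + δ ≤ γ / poissonTail γ (θ + 1) := by
    intro γ hγ
    have hT' : 0 < poissonTail γ (θ + 1) := pt_pos hγ (θ + 1)
    rcases lt_or_ge γ a with hsmall | hga
    · -- small γ
      have hpow : poissonTail γ (θ + 1) ≤ γ ^ (θ + 1) := pt_le_pow hγ (θ + 1)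
      have hγa : γ ≤ a := hsmall.le
      have hγ1 : γ ≤ 1 := le_trans hγa ha1
      have h1 : γ ^ θ ≤ a ^ θ := pow_le_pow_left₀ hγ.le hγa θ
      have h2 : a ^ θ ≤ a := pow_le_of_le_one hapos.le ha1 (by omega)
      have h3 : γ ^ θ ≤ 1 / B := le_trans h1 (le_trans h2 haB)
      have hγθpos : 0 < γ ^ θ := pow_pos hγ θ
      have hBle : B ≤ 1 / γ ^ θ := by
        rw [le_div_iff₀ hγθpos]
        calc B * γ ^ θ ≤ B * (1 / B) := by
              apply mul_le_mul_of_nonneg_left h3 hBpos.le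
          _ = 1 := by field_simp
      have h4 : γ / γ ^ (θ + 1) = 1 / γ ^ θ := by
        rw [pow_succ]
        field_simp
      have h5 : γ / γ ^ (θ + 1) ≤ γ / poissonTail γ (θ + 1) :=
        div_le_div_of_nonneg_left hγ.le hT' hpow
      have : Phi θ + δ ≤ B := by rw [hB]; linarith
      calc Phi θ + δ ≤ B := this
        _ ≤ 1 / γ ^ θ := hBle
        _ = γ / γ ^ (θ + 1) := h4.symm
        _ ≤ γ / poissonTail γ (θ + 1) := h5
    rcases lt_or_ge B γ with hbig | hγb
    · -- large γ
      have hle1 : poissonTail γ (θ + 1) ≤ 1 := pt_le_one hγ (θ + 1)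
      have : γ ≤ γ / poissonTail γ (θ + 1) := by
        rw [le_div_iff₀ hT']
        nlinarith
      have hPB : Phi θ + δ ≤ B := by rw [hB]; linarith
      linarith
    · -- middle
      set T' : ℝ := poissonTail γ (θ + 1)
      set T : ℝ := poissonTail γ θ with hTdef
      set g : ℝ := Real.exp (-γ) * γ ^ θ / θ.factorial with hg
      have hsplit : T = g + T' := pt_succ γ θ
      have hT : 0 < T := pt_pos hγ θ
      have hTle : T ≤ 1 := pt_le_one hγ θ
      have hT'le : T' ≤ 1 := pt_le_one hγ (θ + 1)
      have hgpos : 0 < g := by rw [hg]; positivity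
      have hkey : γ / T + γ * g ≤ γ / T' := by
        rw [div_add' _ _ _ hT.ne', div_le_div_iff₀ hT hT']
        have hTT' : T * T' ≤ 1 := by nlinarith
        nlinarith [mul_nonneg (mul_pos hγ hgpos).le (sub_nonneg.mpr hTT')]
      have hgap : δ₀ ≤ γ * g := by
        rw [hδ₀, hg]
        have h1 : a ^ (θ + 1) ≤ γ ^ (θ + 1) := pow_le_pow_left₀ hapos.le hga _
        have h2 : Real.exp (-B) ≤ Real.exp (-γ) := Real.exp_le_exp.mpr (by linarith)
        have hrw : γ * (Real.exp (-γ) * γ ^ θ / θ.factorial)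
            = γ ^ (θ+1) * Real.exp (-γ) / θ.factorial := by rw [pow_succ]; ring
        rw [hrw]
        gcongr
      have hPT : Phi θ ≤ γ / T := phi_le θ hγ
      calc Phi θ + δ ≤ γ / T + δ₀ := by linarith
        _ ≤ γ / T + γ * g := by linarith
        _ ≤ γ / T' := hkey
  have hle : Phi θ + δ ≤ Phi (θ + 1) := by
    apply le_csInf (phi_set_nonempty (θ + 1))
    rintro x ⟨γ, hγ, rfl⟩
    exact claim γ hγ
  linarith

/-- Φ_1 = 1, Φ_θ < Φ_{θ+1} for θ ≥ 1, and Φ_θ → ∞ as θ → ∞. -/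
theorem stmt8 :
    Phi 1 = 1 ∧
    (∀ θ : ℕ, 1 ≤ θ → Phi θ < Phi (θ + 1)) ∧
    Tendsto (fun θ : ℕ => Phi θ) atTop atTop := by
  refine ⟨phi_one, phi_lt_succ, ?_⟩
  exact tendsto_atTop_mono nat_le_phi tendsto_natCast_atTop_atTop
end

section
/- For every integer θ ≥ 2 and every real γ̄ > 0, sup_{γ ∈ (0,γ̄]} | (θ!/γ^θ)·b^{θ/(θ−1)}·Bin(b, γ·b^{−θ/(θ−1)}, θ) − 1 | → 0 as the integer b → ∞; that is, (θ!/γ^θ)·b^{θ/(θ−1)}·Bin(b, γ·b^{−θ/(θ−1)}, θ) → 1 uniformly in γ ∈ (0,γ̄]. -/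
open Finset Filter Topology Asymptotics Nat

lemma binTail_le_choose_mul_pow (b θ : ℕ) {x : ℝ} (hx0 : 0 ≤ x) (hx1 : x ≤ 1) :
    binTail b x θ ≤ b.choose θ * x ^ θ := by
  rcases lt_or_ge b θ with hbθ | hθb
  · simp [binTail, Icc_eq_empty_of_lt hbθ, choose_eq_zero_of_lt hbθ]
  calc binTail b x θ
      ≤ ∑ i ∈ Icc θ b, (i.choose θ : ℝ) * ((b.choose i : ℝ) * x ^ i * (1 - x) ^ (b - i)) := by
        refine sum_le_sum fun i hi => le_mul_of_one_le_left ?_ ?_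
        · exact mul_nonneg (by positivity) (pow_nonneg (by linarith) _)
        · exact_mod_cast choose_pos (mem_Icc.1 hi).1
    _ = ∑ j ∈ range (b - θ + 1),
          b.choose θ * x ^ θ * (x ^ j * (1 - x) ^ (b - θ - j) * (b - θ).choose j) := by
        rw [← Ico_add_one_right_eq_Icc, sum_Ico_eq_sum_range,
          show b + 1 - θ = b - θ + 1 by omega]
        refine sum_congr rfl fun j _ => ?_
        have h : (b.choose (θ + j) * (θ + j).choose θ : ℝ) = b.choose θ * (b - θ).choose j := by
          exact_mod_cast (add_tsub_cancel_left θ j) ▸ choose_mul (n := b) (le_add_right le_rfl)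
        rw [pow_add, Nat.sub_add_eq]
        linear_combination (x ^ θ * x ^ j * (1 - x) ^ (b - θ - j)) * h
    _ = b.choose θ * x ^ θ := by
        have h := add_pow x (1 - x) (b - θ)
        rw [add_sub_cancel, one_pow] at h
        rw [← mul_sum, ← h, mul_one]

lemma choose_mul_pow_mul_one_sub_le_binTail {b θ : ℕ} (hθb : θ ≤ b) {x : ℝ} (hx0 : 0 ≤ x)
    (hx1 : x ≤ 1) : b.choose θ * x ^ θ * (1 - b * x) ≤ binTail b x θ := by
  have hBernoulli : 1 - b * x ≤ (1 - x) ^ (b - θ) := calc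
      1 - b * x ≤ 1 + (b - θ : ℕ) * (-x) := by
        push_cast [Nat.cast_sub hθb]; nlinarith [(Nat.cast_nonneg θ : (0:ℝ) ≤ θ)]
      _ ≤ (1 + -x) ^ (b - θ) := one_add_mul_le_pow (by linarith) _
      _ = (1 - x) ^ (b - θ) := by ring
  calc _ ≤ (b.choose θ : ℝ) * x ^ θ * (1 - x) ^ (b - θ) := by gcongr
    _ ≤ binTail b x θ :=
      single_le_sum (f := fun i => (b.choose i : ℝ) * x ^ i * (1 - x) ^ (b - i))
        (fun i _ => mul_nonneg (by positivity) (pow_nonneg (by linarith) _))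
        (mem_Icc.2 ⟨le_rfl, hθb⟩)

lemma abs_factorial_div_pow_mul_binTail_sub_one_le {b θ : ℕ} (hθb : θ ≤ b) {x : ℝ}
    (hx0 : 0 < x) (hx1 : x ≤ 1) :
    |θ ! / (b * x) ^ θ * binTail b x θ - 1| ≤ 1 - b.descFactorial θ / b ^ θ * (1 - b * x) := by
  have hc : (0 : ℝ) ≤ θ ! / (b * x) ^ θ := by positivity
  have hcx : θ ! / (b * x) ^ θ * (b.choose θ * x ^ θ) = b.descFactorial θ / b ^ θ := by
    rw [descFactorial_eq_factorial_mul_choose, cast_mul, mul_pow]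
    field_simp
  have hD : (b.descFactorial θ : ℝ) / b ^ θ ≤ 1 :=
    div_le_one_of_le₀ (mod_cast descFactorial_le_pow b θ) (by positivity)
  have hup : θ ! / (b * x) ^ θ * binTail b x θ ≤ b.descFactorial θ / b ^ θ :=
    hcx ▸ mul_le_mul_of_nonneg_left (binTail_le_choose_mul_pow b θ hx0.le hx1) hc
  have hlow : b.descFactorial θ / b ^ θ * (1 - b * x) ≤ θ ! / (b * x) ^ θ * binTail b x θ := by
    rw [← hcx, mul_assoc]
    exact mul_le_mul_of_nonneg_left (choose_mul_pow_mul_one_sub_le_binTail hθb hx0.le hx1) hc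
  rw [abs_sub_comm, abs_of_nonneg (by linarith)]
  linarith

lemma mul_rpow_neg_div_sub_one {b : ℝ} (hb : 0 < b) {θ : ℝ} (hθ : θ ≠ 1) (γ : ℝ) :
    b * (γ * b ^ (-θ / (θ - 1))) = γ * b ^ (-1 / (θ - 1)) := by
  have : θ - 1 ≠ 0 := sub_ne_zero.2 hθ
  rw [mul_left_comm, ← Real.rpow_one_add' hb.le (by field_simp; grind)]
  congr 2
  field_simp
  ring

lemma div_pow_mul_rpow_eq_div_mul_rpow_pow {b : ℝ} (hb : 0 < b) (c γ : ℝ) (θ : ℕ) :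
    c / γ ^ θ * b ^ ((θ : ℝ) / (θ - 1)) = c / (γ * b ^ (-1 / ((θ : ℝ) - 1))) ^ θ := by
  rw [mul_pow, ← Real.rpow_mul_natCast hb.le,
    show -1 / ((θ : ℝ) - 1) * θ = -(θ / (θ - 1)) by ring, Real.rpow_neg hb.le, ← div_div,
    div_inv_eq_mul]

theorem stmt12_general (θ : ℕ) (hθ : 2 ≤ θ) (γbar : ℝ) :
    ∀ ε : ℝ, 0 < ε → ∃ B : ℕ, ∀ b : ℕ, B ≤ b → ∀ γ ∈ Set.Ioc (0:ℝ) γbar,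
      |((θ.factorial : ℝ) / γ ^ θ)
          * (b : ℝ) ^ ((θ : ℝ) / ((θ : ℝ) - 1))
          * binTailExt b (γ * (b : ℝ) ^ (-(θ : ℝ) / ((θ : ℝ) - 1))) θ
        - 1| < ε := by
  intro ε hε
  have hθ1 : 1 < (θ : ℝ) := by exact_mod_cast hθ
  set s : ℕ → ℝ := fun b => γbar * (b : ℝ) ^ (-1 / ((θ : ℝ) - 1))
  set D : ℕ → ℝ := fun b => b.descFactorial θ / b ^ θ
  have hs : Tendsto s atTop (𝓝 0) := by
    simpa [s, neg_div] using ((tendsto_rpow_neg_atTop (y := 1 / ((θ : ℝ) - 1)) (by bound)).comp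
      tendsto_natCast_atTop_atTop).const_mul γbar
  have hD : Tendsto D atTop (𝓝 1) :=
    (isEquivalent_iff_tendsto_one
      ((eventually_ge_atTop 1).mono fun n hn => by positivity)).1 (isEquivalent_descFactorial θ)
  have hL : Tendsto (fun b => 1 - D b * (1 - s b)) atTop (𝓝 0) := by
    simpa using (tendsto_const_nhds (x := (1 : ℝ))).sub
      (hD.mul ((tendsto_const_nhds (x := (1 : ℝ))).sub hs))
  obtain ⟨B, hB⟩ := eventually_atTop.1 ((hL.eventually (gt_mem_nhds hε)).and
    ((hs.eventually (gt_mem_nhds one_pos)).and (eventually_ge_atTop θ)))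
  refine ⟨B, fun b hb γ ⟨hγ0, hγ⟩ => ?_⟩
  obtain ⟨hLε, hs1, hθb⟩ := hB b hb
  have hb : (0 : ℝ) < b := by exact_mod_cast (by omega : 0 < b)
  set x := γ * (b : ℝ) ^ (-(θ : ℝ) / ((θ : ℝ) - 1))
  have hbx : b * x ≤ s b := by
    rw [mul_rpow_neg_div_sub_one hb hθ1.ne']
    exact mul_le_mul_of_nonneg_right hγ (by positivity)
  have hx0 : 0 < x := by positivity
  have hx1 : x ≤ 1 := by
    have : x ≤ b * x := le_mul_of_one_le_left hx0.le (by exact_mod_cast (by omega : 1 ≤ b))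
    linarith
  rw [binTailExt, if_pos hx1, div_pow_mul_rpow_eq_div_mul_rpow_pow hb,
    ← mul_rpow_neg_div_sub_one hb hθ1.ne']
  calc _ ≤ 1 - D b * (1 - b * x) := abs_factorial_div_pow_mul_binTail_sub_one_le hθb hx0 hx1
    _ ≤ 1 - D b * (1 - s b) := by gcongr
    _ < ε := hLε

/-- (θ!/γ^θ)·b^{θ/(θ−1)}·Bin(b, γ·b^{−θ/(θ−1)}, θ) → 1 as b → ∞,
uniformly in γ ∈ (0, γ̄]. -/
theorem stmt12 (θ : ℕ) (hθ : 2 ≤ θ) (γbar : ℝ) (hγbar : 0 < γbar) :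
    ∀ ε : ℝ, 0 < ε → ∃ B : ℕ, ∀ b : ℕ, B ≤ b → ∀ γ ∈ Set.Ioc (0:ℝ) γbar,
      |((θ.factorial : ℝ) / γ ^ θ)
          * (b : ℝ) ^ ((θ : ℝ) / ((θ : ℝ) - 1))
          * binTailExt b (γ * (b : ℝ) ^ (-(θ : ℝ) / ((θ : ℝ) - 1))) θ
        - 1| < ε :=
  stmt12_general θ hθ γbar
end

section
/- For every integer θ ≥ 2 and every real λ > 0, lim_{b→∞} b^{θ/(θ−1)} · p_c^MF(b,θ,λ) = (θ!/λ)^{1/(θ−1)}, where the limit is taken over integers b → ∞. -/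
/-!
As `C(b,θ) x^θ (1-x)^(b-θ) ≤ Bin(b,x,θ) ≤ C(b,θ) x^θ`, the condition `H(b,θ,λ;x) ≥ 0` forces
`λ C(b,θ) x^(θ-1) ≥ 1`, hence `θ! ≤ λ b^θ x^(θ-1)`, i.e. `x ≥ c_b := (θ!/(λ b^θ))^(1/(θ-1))`.
Conversely, for `t > 1` the point `x = t c_b` has `b x → 0` and, since `C(b,θ) ~ b^θ/θ!`,
`λ C(b,θ) x^(θ-1) (1 - b x) → t^(θ-1) > 1`; by Bernoulli's inequality this quantity is a lower
bound for `1 + H`, so `x` is admissible for large `b`. Hence `c_b ≤ p_c^MF ≤ t c_b` eventually,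
and `b^(θ/(θ-1)) c_b = (θ!/λ)^(1/(θ-1))`.
-/

open Filter

open Finset Nat Topology Asymptotics

lemma binTail_le_choose_mul_pow_s13 (κ θ : ℕ) {x : ℝ} (hx₀ : 0 ≤ x) (hx₁ : x ≤ 1) :
    binTail κ x θ ≤ κ.choose θ * x ^ θ := by
  rcases lt_or_ge κ θ with hκθ | hθκ
  · simp [binTail, Icc_eq_empty_of_lt hκθ, choose_eq_zero_of_lt hκθ]
  obtain ⟨m, rfl⟩ := Nat.exists_eq_add_of_le hθκ
  have h1x : 0 ≤ 1 - x := by linarith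
  calc binTail (θ + m) x θ
      = ∑ j ∈ range (m + 1), ((θ + m).choose (θ + j) : ℝ) * x ^ (θ + j) * (1 - x) ^ (m - j) := by
        rw [binTail, ← Ico_add_one_right_eq_Icc, sum_Ico_eq_sum_range]
        refine sum_congr (by congr 1; omega) fun j _ => ?_
        congr 2; omega
    _ ≤ ∑ j ∈ range (m + 1),
          ((θ + m).choose θ * x ^ θ) * (x ^ j * (1 - x) ^ (m - j) * m.choose j) := by
        refine sum_le_sum fun j hj => ?_
        have hchoose : (θ + m).choose (θ + j) ≤ (θ + m).choose θ * m.choose j := by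
          calc (θ + m).choose (θ + j) ≤ (θ + m).choose (θ + j) * (θ + j).choose θ :=
                Nat.le_mul_of_pos_right _ (choose_pos (by omega))
            _ = (θ + m).choose θ * m.choose j := by
                rw [choose_mul (by omega)]; simp
        calc ((θ + m).choose (θ + j) : ℝ) * x ^ (θ + j) * (1 - x) ^ (m - j)
            ≤ ((θ + m).choose θ * m.choose j : ℕ) * x ^ (θ + j) * (1 - x) ^ (m - j) := by
              gcongr
          _ = _ := by push_cast; ring
    _ = (θ + m).choose θ * x ^ θ * (x + (1 - x)) ^ m := by rw [add_pow, mul_sum]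
    _ = (θ + m).choose θ * x ^ θ := by simp

lemma choose_mul_pow_mul_pow_le_binTail {κ θ : ℕ} (hθκ : θ ≤ κ) {x : ℝ} (hx₀ : 0 ≤ x)
    (hx₁ : x ≤ 1) : κ.choose θ * x ^ θ * (1 - x) ^ (κ - θ) ≤ binTail κ x θ := by
  have h1x : 0 ≤ 1 - x := by linarith
  exact single_le_sum (f := fun i => (κ.choose i : ℝ) * x ^ i * (1 - x) ^ (κ - i))
    (fun i _ => by positivity) (mem_Icc.2 ⟨le_rfl, hθκ⟩)

section Hmf

variable {κ θ : ℕ} {lam x : ℝ}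

lemma Hmf_le (hθ : 1 ≤ θ) (hlam : 0 ≤ lam) (hx₀ : 0 < x) (hx₁ : x ≤ 1) :
    Hmf κ θ lam x ≤ -1 + lam * κ.choose θ * x ^ (θ - 1) := by
  have hxθ : x ^ θ = x * x ^ (θ - 1) := (mul_pow_sub_one (by omega) x).symm
  have h1x : 0 ≤ 1 - x := by linarith
  calc Hmf κ θ lam x ≤ -1 + lam * ((1 - x) / x) * (κ.choose θ * x ^ θ) := by
        unfold Hmf; gcongr; exact binTail_le_choose_mul_pow_s13 κ θ hx₀.le hx₁
    _ = -1 + lam * κ.choose θ * x ^ (θ - 1) * (1 - x) := by rw [hxθ]; field_simp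
    _ ≤ -1 + lam * κ.choose θ * x ^ (θ - 1) := by
        have : 0 ≤ lam * κ.choose θ * x ^ (θ - 1) := by positivity
        nlinarith

lemma le_Hmf (hθ : 1 ≤ θ) (hθκ : θ ≤ κ) (hlam : 0 ≤ lam) (hx₀ : 0 < x) (hx₁ : x ≤ 1) :
    -1 + lam * κ.choose θ * x ^ (θ - 1) * (1 - κ * x) ≤ Hmf κ θ lam x := by
  have hxθ : x ^ θ = x * x ^ (θ - 1) := (mul_pow_sub_one (by omega) x).symm
  have h1x : 0 ≤ 1 - x := by linarith
  have hbernoulli : 1 - κ * x ≤ (1 - x) ^ (κ - θ + 1) := by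
    have := one_add_mul_sub_le_pow (a := 1 - x) (by linarith) (κ - θ + 1)
    have hcast : ((κ - θ + 1 : ℕ) : ℝ) ≤ κ := by exact_mod_cast (by omega : κ - θ + 1 ≤ κ)
    nlinarith
  calc -1 + lam * κ.choose θ * x ^ (θ - 1) * (1 - κ * x)
      ≤ -1 + lam * κ.choose θ * x ^ (θ - 1) * (1 - x) ^ (κ - θ + 1) := by gcongr
    _ = -1 + lam * ((1 - x) / x) * (κ.choose θ * x ^ θ * (1 - x) ^ (κ - θ)) := by
        rw [hxθ, pow_succ]; field_simp
    _ ≤ Hmf κ θ lam x := by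
        unfold Hmf; gcongr; exact choose_mul_pow_mul_pow_le_binTail hθκ hx₀.le hx₁

lemma factorial_le_of_Hmf_nonneg (hθ : 1 ≤ θ) (hlam : 0 ≤ lam) (hx₀ : 0 < x) (hx₁ : x ≤ 1)
    (hH : 0 ≤ Hmf κ θ lam x) : (θ ! : ℝ) ≤ lam * κ ^ θ * x ^ (θ - 1) := by
  have hchoose : (θ ! * κ.choose θ : ℝ) ≤ κ ^ θ := by
    exact_mod_cast descFactorial_eq_factorial_mul_choose κ θ ▸ descFactorial_le_pow κ θ
  have := Hmf_le (κ := κ) hθ hlam hx₀ hx₁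
  calc (θ ! : ℝ) ≤ θ ! * (lam * κ.choose θ * x ^ (θ - 1)) := by
        nlinarith [(by positivity : (0 : ℝ) < θ !)]
    _ = lam * (θ ! * κ.choose θ) * x ^ (θ - 1) := by ring
    _ ≤ lam * κ ^ θ * x ^ (θ - 1) := by gcongr

end Hmf

lemma pcMF_mem_Icc {κ θ : ℕ} {lam c u : ℝ}
    (hc : ∀ x ∈ Set.Ioc (0 : ℝ) 1, 0 ≤ Hmf κ θ lam x → c ≤ x)
    (hu : u ∈ Set.Ioc (0 : ℝ) 1) (hHu : 0 ≤ Hmf κ θ lam u) : pcMF κ θ lam ∈ Set.Icc c u :=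
  ⟨le_csInf ⟨u, hu, hHu⟩ fun x hx => hc x hx.1 hx.2,
    csInf_le ⟨0, fun _ hx => hx.1.1.le⟩ ⟨hu, hHu⟩⟩

lemma eventually_Hmf_nonneg {θ : ℕ} (hθ : 1 ≤ θ) {lam L : ℝ} (hlam : 0 ≤ lam) {x : ℕ → ℝ}
    (hx₀ : ∀ᶠ b in atTop, 0 < x b) (hbx : Tendsto (fun b : ℕ => b * x b) atTop (𝓝 0))
    (hL : Tendsto (fun b : ℕ => lam * b ^ θ * x b ^ (θ - 1)) atTop (𝓝 L)) (hθL : (θ ! : ℝ) < L) :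
    ∀ᶠ b in atTop, x b ∈ Set.Ioc 0 1 ∧ 0 ≤ Hmf b θ lam (x b) := by
  have hchoose : Tendsto (fun b : ℕ => b.choose θ * (lam * x b ^ (θ - 1))) atTop
      (𝓝 (L / θ !)) := by
    have hequiv : (fun b : ℕ => b.choose θ * (lam * x b ^ (θ - 1))) ~[atTop]
        fun b => (b ^ θ / θ ! : ℝ) * (lam * x b ^ (θ - 1)) :=
      (isEquivalent_choose θ).mul IsEquivalent.refl
    refine hequiv.tendsto_nhds_iff.2 ((hL.div_const (θ ! : ℝ)).congr fun b => ?_)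
    ring
  have hlim : Tendsto (fun b : ℕ => b.choose θ * (lam * x b ^ (θ - 1)) * (1 - b * x b)) atTop
      (𝓝 (L / θ !)) := by
    simpa using hchoose.mul ((tendsto_const_nhds (x := (1 : ℝ))).sub hbx)
  have hone : 1 < L / θ ! := by rw [one_lt_div (by positivity)]; exact hθL
  filter_upwards [hx₀, hbx.eventually_lt_const one_pos, hlim.eventually_const_lt hone,
    eventually_ge_atTop θ] with b hxb hbxb hgt hθb
  have hx₁ : x b ≤ 1 := by
    have : (1 : ℝ) ≤ b := by exact_mod_cast (by omega : 1 ≤ b)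
    nlinarith
  refine ⟨⟨hxb, hx₁⟩, ?_⟩
  have := le_Hmf hθ hθb hlam hxb hx₁
  nlinarith

noncomputable def critScale (θ : ℕ) (lam b : ℝ) : ℝ :=
  ((θ ! : ℝ) / lam) ^ (1 / ((θ : ℝ) - 1)) / b ^ ((θ : ℝ) / ((θ : ℝ) - 1))

section critScale

variable {θ : ℕ} {lam b : ℝ}

lemma critScale_pow_mul_pow (hθ : 2 ≤ θ) (hlam : 0 ≤ lam) (hb : 0 < b) :
    critScale θ lam b ^ (θ - 1) * b ^ θ = θ ! / lam := by
  have hθ' : ((θ - 1 : ℕ) : ℝ) = (θ : ℝ) - 1 := by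
    rw [Nat.cast_sub (by omega), Nat.cast_one]
  have hθ₁ : (θ : ℝ) - 1 ≠ 0 := by
    rw [← hθ']; exact_mod_cast (by omega : θ - 1 ≠ 0)
  rw [critScale, div_pow, ← Real.rpow_natCast, ← Real.rpow_natCast (_ ^ _),
    ← Real.rpow_mul (by positivity), ← Real.rpow_mul hb.le, hθ', one_div_mul_cancel hθ₁,
    div_mul_cancel₀ _ hθ₁, Real.rpow_one, Real.rpow_natCast,
    div_mul_cancel₀ _ (by positivity)]

lemma critScale_le_of_Hmf_nonneg (hθ : 2 ≤ θ) (hlam : 0 < lam) {κ : ℕ} (hκ : 0 < κ) {x : ℝ}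
    (hx₀ : 0 < x) (hx₁ : x ≤ 1) (hH : 0 ≤ Hmf κ θ lam x) : critScale θ lam κ ≤ x := by
  have hκ' : (0 : ℝ) < κ := by exact_mod_cast hκ
  refine (pow_le_pow_iff_left₀ (by unfold critScale; positivity) hx₀.le
    (by omega : θ - 1 ≠ 0)).1 ?_
  have hfac := factorial_le_of_Hmf_nonneg (by omega) hlam.le hx₀ hx₁ hH
  have hscale := critScale_pow_mul_pow hθ hlam.le hκ'
  rw [← eq_div_iff (by positivity), div_div] at hscale
  rw [hscale, div_le_iff₀ (by positivity)]
  linarith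

lemma tendsto_natCast_mul_critScale (hθ : 2 ≤ θ) (lam : ℝ) :
    Tendsto (fun b : ℕ => (b : ℝ) * critScale θ lam b) atTop (𝓝 0) := by
  have hθ₁ : 0 < (θ : ℝ) - 1 := by
    have : (2 : ℝ) ≤ θ := by exact_mod_cast hθ
    linarith
  have hexp : (θ : ℝ) / ((θ : ℝ) - 1) = 1 + 1 / ((θ : ℝ) - 1) := by field_simp; ring
  have h := ((tendsto_rpow_neg_atTop (one_div_pos.2 hθ₁)).comp
    tendsto_natCast_atTop_atTop).const_mul (((θ ! : ℝ) / lam) ^ (1 / ((θ : ℝ) - 1)))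
  rw [mul_zero] at h
  refine h.congr' ?_
  filter_upwards [eventually_gt_atTop 0] with b hb
  have hb' : (0 : ℝ) < b := by exact_mod_cast hb
  rw [Function.comp_apply, critScale, hexp, Real.rpow_add hb', Real.rpow_one,
    Real.rpow_neg hb'.le]
  field_simp

lemma eventually_Hmf_mul_critScale_nonneg (hθ : 2 ≤ θ) (hlam : 0 < lam) {t : ℝ} (ht : 1 < t) :
    ∀ᶠ b : ℕ in atTop, t * critScale θ lam b ∈ Set.Ioc 0 1 ∧
      0 ≤ Hmf b θ lam (t * critScale θ lam b) := by
  refine eventually_Hmf_nonneg (L := t ^ (θ - 1) * θ !) (by omega) hlam.le ?_ ?_ ?_ ?_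
  · filter_upwards [eventually_gt_atTop 0] with b hb
    have : (0 : ℝ) < b := by exact_mod_cast hb
    unfold critScale; positivity
  · simpa [mul_left_comm] using (tendsto_natCast_mul_critScale hθ lam).const_mul t
  · refine tendsto_const_nhds.congr' ?_
    filter_upwards [eventually_gt_atTop 0] with b hb
    rw [mul_pow, mul_right_comm, mul_assoc lam, mul_assoc, critScale_pow_mul_pow hθ hlam.le
      (by exact_mod_cast hb)]
    field_simp
  · exact lt_mul_left (by positivity) (one_lt_pow₀ ht (by omega))

end critScale

lemma eventually_rpow_mul_pcMF_mem_Icc {θ : ℕ} (hθ : 2 ≤ θ) {lam : ℝ} (hlam : 0 < lam) {t : ℝ}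
    (ht : 1 < t) : ∀ᶠ b : ℕ in atTop, (b : ℝ) ^ ((θ : ℝ) / ((θ : ℝ) - 1)) * pcMF b θ lam ∈
      Set.Icc (((θ ! : ℝ) / lam) ^ (1 / ((θ : ℝ) - 1)))
        (t * ((θ ! : ℝ) / lam) ^ (1 / ((θ : ℝ) - 1))) := by
  filter_upwards [eventually_Hmf_mul_critScale_nonneg hθ hlam ht, eventually_gt_atTop 0]
    with b ⟨hmem, hH⟩ hb
  have hbp : 0 < (b : ℝ) ^ ((θ : ℝ) / ((θ : ℝ) - 1)) := by positivity
  obtain ⟨hlow, hupp⟩ := pcMF_mem_Icc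
    (fun x hx => critScale_le_of_Hmf_nonneg hθ hlam hb hx.1 hx.2) hmem hH
  have hscale : (b : ℝ) ^ ((θ : ℝ) / ((θ : ℝ) - 1)) * critScale θ lam b =
      ((θ ! : ℝ) / lam) ^ (1 / ((θ : ℝ) - 1)) := mul_div_cancel₀ _ hbp.ne'
  constructor
  · rw [← hscale]; gcongr
  · calc _ ≤ (b : ℝ) ^ ((θ : ℝ) / ((θ : ℝ) - 1)) * (t * critScale θ lam b) := by gcongr
      _ = _ := by rw [mul_left_comm, hscale]

/-- b^{θ/(θ−1)}·p_c^MF(b,θ,λ) → (θ!/λ)^{1/(θ−1)} as b → ∞. -/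
theorem stmt13 (θ : ℕ) (hθ : 2 ≤ θ) (lam : ℝ) (hlam : 0 < lam) :
    Tendsto
      (fun b : ℕ => (b : ℝ) ^ ((θ : ℝ) / ((θ : ℝ) - 1)) * pcMF b θ lam)
      atTop
      (nhds (((θ.factorial : ℝ) / lam) ^ (1 / ((θ : ℝ) - 1)))) := by
  have hA : 0 < ((θ ! : ℝ) / lam) ^ (1 / ((θ : ℝ) - 1)) := by positivity
  refine tendsto_order.2 ⟨fun a ha => ?_, fun a ha => ?_⟩
  · filter_upwards [eventually_rpow_mul_pcMF_mem_Icc hθ hlam one_lt_two] with b hb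
    exact ha.trans_le hb.1
  · obtain ⟨m, hAm, hma⟩ := exists_between ha
    filter_upwards [eventually_rpow_mul_pcMF_mem_Icc hθ hlam ((one_lt_div hA).2 hAm)] with b hb
    exact hb.2.trans_lt (by rwa [div_mul_cancel₀ _ hA.ne'])
end

section
/- (Scaled bound on the bootstrap fixed point.) For every integer θ ≥ 2 there exists γ₀ > 0 such that for every γ ∈ (0,γ₀) there exists b̄ with the following property: for every integer b ≥ b̄, setting p = γ·b^{−θ/(θ−1)}, the quantity p_∞^+ := inf{x ∈ (0,1] : x = p + (1−p)·Bin(b,x,θ)} satisfies p_∞^+ ≤ γ̄(γ)·b^{−θ/(θ−1)}, where γ̄(γ) = inf{x > 0 : x = γ + 2x^θ/θ!}. -/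
/-- γ̄(γ) = inf{x > 0 : x = γ + 2x^θ/θ!}. -/
noncomputable def gammaBar (θ : ℕ) (γ : ℝ) : ℝ :=
  sInf {x : ℝ | 0 < x ∧ x = γ + 2 * x ^ θ / (θ.factorial : ℝ)}

/-!
Write `β = b ^ (-θ/(θ-1))`, so that `b β = b ^ (-1/(θ-1))` and `(b β)^θ = β`. While `b x ≤ 1/2`,
the binomial tail is dominated by its first term, `Bin(b, x, θ) ≤ 2 (b x)^θ / θ!`. At `x = γ̄ β`
this gives `p + (1 - p) Bin(b, x, θ) ≤ (γ + 2 γ̄^θ / θ!) β = γ̄ β = x`, while at `x = 0` the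
right-hand side is `p > 0`, so the intermediate value theorem yields a fixed point in `(0, γ̄ β]`.
-/

open Set

lemma exists_eq_apply_mem_Ioc {f : ℝ → ℝ} {a : ℝ} (ha : 0 ≤ a)
    (hf : ContinuousOn f (Icc 0 a)) (h0 : 0 < f 0) (hfa : f a ≤ a) :
    ∃ c ∈ Ioc 0 a, c = f c := by
  obtain ⟨c, hc, hfc⟩ := intermediate_value_Icc' ha (hf.sub continuousOn_id)
    (show (0 : ℝ) ∈ Icc (f a - a) (f 0 - 0) from ⟨by linarith, by linarith⟩)
  have hc_eq : c = f c := by simpa [sub_eq_zero, eq_comm] using hfc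
  refine ⟨c, ⟨hc.1.lt_of_ne ?_, hc.2⟩, hc_eq⟩
  rintro rfl
  exact h0.ne' hc_eq.symm

lemma choose_mul_pow_mul_pow_le (b i : ℕ) {x : ℝ} (hx₀ : 0 ≤ x) (hx₁ : x ≤ 1) :
    (b.choose i : ℝ) * x ^ i * (1 - x) ^ (b - i) ≤ ((b : ℝ) * x) ^ i / i.factorial :=
  calc (b.choose i : ℝ) * x ^ i * (1 - x) ^ (b - i)
      ≤ (b.choose i : ℝ) * x ^ i * 1 := by
        gcongr
        exact pow_le_one₀ (by linarith) (by linarith)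
    _ ≤ (b : ℝ) ^ i / i.factorial * x ^ i := by
        rw [mul_one]; gcongr; exact Nat.choose_le_pow_div i b
    _ = ((b : ℝ) * x) ^ i / i.factorial := by ring

lemma pow_div_factorial_le_of_le_half {y : ℝ} (hy₀ : 0 ≤ y) (hy : y ≤ 1 / 2) {θ i : ℕ}
    (hi : θ ≤ i) : y ^ i / i.factorial ≤ y ^ θ / θ.factorial * (1 / 2) ^ (i - θ) := by
  have hfact : (θ.factorial : ℝ) ≤ i.factorial := by exact_mod_cast Nat.factorial_le hi
  calc y ^ i / i.factorial ≤ y ^ i / θ.factorial := by gcongr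
    _ = y ^ θ * y ^ (i - θ) / θ.factorial := by rw [← pow_add, Nat.add_sub_cancel' hi]
    _ ≤ y ^ θ * (1 / 2) ^ (i - θ) / θ.factorial := by gcongr
    _ = y ^ θ / θ.factorial * (1 / 2) ^ (i - θ) := by ring

lemma sum_Icc_half_pow_sub_le_two (θ b : ℕ) : ∑ i ∈ Finset.Icc θ b, (1 / 2 : ℝ) ^ (i - θ) ≤ 2 := by
  rw [← Finset.Ico_add_one_right_eq_Icc, Finset.sum_Ico_eq_sum_range]
  simpa using sum_geometric_two_le (b + 1 - θ)

lemma binTail_le_of_mul_le_half (b θ : ℕ) {x : ℝ} (hx₀ : 0 ≤ x) (hx₁ : x ≤ 1)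
    (hbx : (b : ℝ) * x ≤ 1 / 2) :
    binTail b x θ ≤ 2 * ((b : ℝ) * x) ^ θ / θ.factorial := by
  have hbx₀ : 0 ≤ (b : ℝ) * x := by positivity
  calc binTail b x θ
      ≤ ∑ i ∈ Finset.Icc θ b, ((b : ℝ) * x) ^ θ / θ.factorial * (1 / 2) ^ (i - θ) := by
        refine Finset.sum_le_sum fun i hi => ?_
        exact (choose_mul_pow_mul_pow_le b i hx₀ hx₁).trans
          (pow_div_factorial_le_of_le_half hbx₀ hbx (Finset.mem_Icc.1 hi).1)
    _ = ((b : ℝ) * x) ^ θ / θ.factorial * ∑ i ∈ Finset.Icc θ b, (1 / 2 : ℝ) ^ (i - θ) := by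
        rw [Finset.mul_sum]
    _ ≤ ((b : ℝ) * x) ^ θ / θ.factorial * 2 := by
        gcongr; exact sum_Icc_half_pow_sub_le_two θ b
    _ = 2 * ((b : ℝ) * x) ^ θ / θ.factorial := by ring

lemma binTail_nonneg_s17 (b θ : ℕ) {x : ℝ} (hx₀ : 0 ≤ x) (hx₁ : x ≤ 1) : 0 ≤ binTail b x θ :=
  Finset.sum_nonneg fun i _ => by
    have : 0 ≤ 1 - x := by linarith
    positivity

lemma binTail_zero (b : ℕ) {θ : ℕ} (hθ : θ ≠ 0) : binTail b 0 θ = 0 :=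
  Finset.sum_eq_zero fun i hi => by
    rw [zero_pow (by have := (Finset.mem_Icc.1 hi).1; omega), mul_zero, zero_mul]

lemma continuous_binTail (b θ : ℕ) : Continuous fun x => binTail b x θ := by
  unfold binTail
  fun_prop

lemma gammaBar_mem_Ioc_and_eq {θ : ℕ} (hθ : 2 ≤ θ) {γ : ℝ} (hγ₀ : 0 < γ) (hγ : γ < 1 / 4) :
    gammaBar θ γ ∈ Ioc 0 (1 / 2) ∧
      gammaBar θ γ = γ + 2 * gammaBar θ γ ^ θ / θ.factorial := by
  set f : ℝ → ℝ := fun x => γ + 2 * x ^ θ / θ.factorial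
  have hfact : (2 : ℝ) ≤ θ.factorial := by exact_mod_cast Nat.factorial_le hθ
  have hf_ge (x : ℝ) (hx : 0 < x) : γ ≤ f x := by
    have : 0 ≤ 2 * x ^ θ / θ.factorial := by positivity
    linarith
  have hf_half : f (1 / 2) ≤ 1 / 2 := by
    have : (1 / 2 : ℝ) ^ θ ≤ (1 / 2) ^ 2 := pow_le_pow_of_le_one (by norm_num) (by norm_num) hθ
    have : 2 * (1 / 2 : ℝ) ^ θ / θ.factorial ≤ 2 * (1 / 2) ^ 2 / 2 := by gcongr
    linarith
  obtain ⟨s, hs, hs_eq⟩ := exists_eq_apply_mem_Ioc (f := f) (by norm_num) (by fun_prop)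
    (by simp [f, zero_pow (by omega : θ ≠ 0), hγ₀]) hf_half
  -- `0 < x` is not a closed condition, but on solutions it is equivalent to `γ ≤ x`.
  have hset : {x : ℝ | 0 < x ∧ x = f x} = {x | γ ≤ x} ∩ {x | x = f x} := by
    ext x
    exact ⟨fun h => ⟨h.2 ▸ hf_ge x h.1, h.2⟩, fun h => ⟨hγ₀.trans_le h.1, h.2⟩⟩
  have hbdd : BddBelow {x : ℝ | 0 < x ∧ x = f x} := ⟨0, fun x hx => hx.1.le⟩
  have hmem : gammaBar θ γ ∈ {x : ℝ | 0 < x ∧ x = f x} := by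
    refine IsClosed.csInf_mem ?_ ⟨s, hs.1, hs_eq⟩ hbdd
    rw [hset]
    exact (isClosed_le continuous_const continuous_id).inter
      (isClosed_eq continuous_id (by fun_prop))
  exact ⟨⟨hmem.1, (csInf_le hbdd ⟨hs.1, hs_eq⟩).trans hs.2⟩, hmem.2⟩

lemma self_mul_rpow_neg_div_sub_one {b : ℝ} (hb : 0 < b) {θ : ℝ} (hθ : θ ≠ 1) :
    b * b ^ (-θ / (θ - 1)) = b ^ (-1 / (θ - 1)) := by
  have : θ - 1 ≠ 0 := sub_ne_zero.2 hθ
  have hexp : 1 + -θ / (θ - 1) = -1 / (θ - 1) := by field_simp; ring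
  rw [← Real.rpow_one_add' hb.le (by rw [hexp]; exact div_ne_zero (by norm_num) this), hexp]

lemma self_mul_rpow_neg_div_sub_one_pow {b : ℝ} (hb : 0 < b) {θ : ℕ} (hθ : (θ : ℝ) ≠ 1) :
    (b * b ^ (-(θ : ℝ) / (θ - 1))) ^ θ = b ^ (-(θ : ℝ) / (θ - 1)) := by
  rw [self_mul_rpow_neg_div_sub_one hb hθ, ← Real.rpow_natCast, ← Real.rpow_mul hb.le]
  congr 1
  ring

lemma sInf_fixedPoints_binTail_le (b : ℕ) {θ : ℕ} (hθ : θ ≠ 0) {p x : ℝ} (hp₀ : 0 < p)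
    (hx₀ : 0 ≤ x) (hx₁ : x ≤ 1) (hx : p + (1 - p) * binTail b x θ ≤ x) :
    sInf {y ∈ Ioc (0 : ℝ) 1 | y = p + (1 - p) * binTail b y θ} ≤ x := by
  obtain ⟨c, hc, hc_eq⟩ :=
    exists_eq_apply_mem_Ioc (f := fun y => p + (1 - p) * binTail b y θ) hx₀
      (by have := continuous_binTail b θ; fun_prop) (by simpa [binTail_zero b hθ] using hp₀) hx
  have hbdd : BddBelow {y ∈ Ioc (0 : ℝ) 1 | y = p + (1 - p) * binTail b y θ} :=
    ⟨0, fun y hy => hy.1.1.le⟩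
  exact (csInf_le hbdd ⟨⟨hc.1, hc.2.trans hx₁⟩, hc_eq⟩).trans hc.2

/-- Scaled bound on the bootstrap fixed point. -/
theorem stmt17 (θ : ℕ) (hθ : 2 ≤ θ) :
    ∃ γ₀ : ℝ, 0 < γ₀ ∧ ∀ γ ∈ Set.Ioo (0:ℝ) γ₀, ∃ bbar : ℕ,
      ∀ b : ℕ, bbar ≤ b →
        sInf {x ∈ Set.Ioc (0:ℝ) 1 |
            x = γ * (b : ℝ) ^ (-(θ : ℝ) / ((θ : ℝ) - 1))
              + (1 - γ * (b : ℝ) ^ (-(θ : ℝ) / ((θ : ℝ) - 1))) * binTail b x θ}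
          ≤ gammaBar θ γ * (b : ℝ) ^ (-(θ : ℝ) / ((θ : ℝ) - 1)) := by
  refine ⟨1 / 4, by norm_num, fun γ ⟨hγ₀, hγ⟩ => ⟨1, fun b hb => ?_⟩⟩
  obtain ⟨⟨hg₀, hg⟩, hg_eq⟩ := gammaBar_mem_Ioc_and_eq hθ hγ₀ hγ
  set g := gammaBar θ γ
  have hb : (1 : ℝ) ≤ b := by exact_mod_cast hb
  have hθ₁ : (1 : ℝ) < θ := by exact_mod_cast hθ
  set β := (b : ℝ) ^ (-(θ : ℝ) / ((θ : ℝ) - 1))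
  have hβ₀ : 0 < β := by positivity
  have hβ₁ : β ≤ 1 := Real.rpow_le_one_of_one_le_of_nonpos hb
    (div_nonpos_of_nonpos_of_nonneg (by linarith) (by linarith))
  have hbβ : (b : ℝ) * β ≤ 1 := by
    rw [self_mul_rpow_neg_div_sub_one (by positivity) hθ₁.ne']
    exact Real.rpow_le_one_of_one_le_of_nonpos hb
      (div_nonpos_of_nonpos_of_nonneg (by norm_num) (by linarith))
  have hbβθ : ((b : ℝ) * β) ^ θ = β := self_mul_rpow_neg_div_sub_one_pow (by positivity) hθ₁.ne'
  have hx₁ : g * β ≤ 1 := by nlinarith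
  have hbx : (b : ℝ) * (g * β) ≤ 1 / 2 := by nlinarith
  have htail : binTail b (g * β) θ ≤ 2 * g ^ θ / θ.factorial * β := by
    have := binTail_le_of_mul_le_half b θ (by positivity) hx₁ hbx
    rw [mul_left_comm, mul_pow, hbβθ] at this
    exact this.trans_eq (by ring)
  refine sInf_fixedPoints_binTail_le b (by omega) (by positivity) (by positivity) hx₁ ?_
  have := binTail_nonneg_s17 b θ (x := g * β) (by positivity) hx₁
  calc γ * β + (1 - γ * β) * binTail b (g * β) θ ≤ γ * β + 2 * g ^ θ / θ.factorial * β := by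
        nlinarith [mul_nonneg (mul_nonneg hγ₀.le hβ₀.le) this]
    _ = g * β := by linear_combination (-β) * hg_eq
end
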